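/- arXiv:1401.7023 — 6 statements merged into one kernel-verified Lean document; each statement's English description precedes it below -/
import Mathlib

section
/- Let Γ be a template of cogenus δ and length ℓ. Then for every i = 1,…,ℓ, one has λ̄_i(Γ) ≤ min{δ, δ−(ℓ−i)+ε_1(Γ), δ+1−i+ε_0(Γ)}. -/
open scoped Classical

/-- A long-edge graph: a finite multiset of weighted edges `(i, (j, ρ))` (an edge from `i`
to `j` of weight `ρ`) on the vertex set `ℕ`, with `i < j`, `ρ ≥ 1`, and no edge of
weight `1` connecting consecutive vertices. -/
structure LongEdgeGraph where
  edges : Multiset (ℕ × ℕ × ℕ)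
  valid : ∀ e ∈ edges, e.1 < e.2.1 ∧ 1 ≤ e.2.2 ∧ ¬(e.2.1 = e.1 + 1 ∧ e.2.2 = 1)

namespace LongEdgeGraph

/-- The cogenus `δ(G) = ∑_e (ℓ(e)·ρ(e) − 1)`, where `ℓ(e)` is the length of `e`. -/
def cogenus (G : LongEdgeGraph) : ℕ :=
  (G.edges.map fun e => (e.2.1 - e.1) * e.2.2 - 1).sum

/-- The multiplicity `μ(G) = ∏_e ρ(e)^2`. -/
def mult (G : LongEdgeGraph) : ℕ :=
  (G.edges.map fun e => e.2.2 ^ 2).prod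

/-- `λ_j(G)`: the sum of the weights of the edges from `i` to `k` with `i < j ≤ k`. -/
def lam (G : LongEdgeGraph) (j : ℕ) : ℕ :=
  ((G.edges.filter fun e => e.1 < j ∧ j ≤ e.2.1).map fun e => e.2.2).sum

/-- `λ̄_j(G) = λ_j(G)` minus the number of edges of `G` from `j−1` to `j`. -/
def lambar (G : LongEdgeGraph) (j : ℕ) : ℕ :=
  G.lam j - Multiset.card (G.edges.filter fun e => e.1 + 1 = j ∧ e.2.1 = j)

/-- The set of vertices of `G` with nonzero degree. -/
def verts (G : LongEdgeGraph) : Set ℕ :=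
  {v | ∃ e ∈ G.edges, e.1 = v ∨ e.2.1 = v}

/-- `minv(G)`: the smallest vertex of `G` with nonzero degree. -/
noncomputable def minv (G : LongEdgeGraph) : ℕ := sInf G.verts

/-- `maxv(G)`: the largest vertex of `G` with nonzero degree. -/
noncomputable def maxv (G : LongEdgeGraph) : ℕ := sSup G.verts

/-- The length `ℓ(G) = maxv(G) − minv(G)`. -/
noncomputable def lengthG (G : LongEdgeGraph) : ℕ := G.maxv - G.minv

/-- `ε_0(G)`: `1` if every edge incident to `minv(G)` has weight `1`, and `0` otherwise. -/
noncomputable def eps0 (G : LongEdgeGraph) : ℕ :=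
  if ∀ e ∈ G.edges, (e.1 = G.minv ∨ e.2.1 = G.minv) → e.2.2 = 1 then 1 else 0

/-- `ε_1(G)`: `1` if every edge incident to `maxv(G)` has weight `1`, and `0` otherwise. -/
noncomputable def eps1 (G : LongEdgeGraph) : ℕ :=
  if ∀ e ∈ G.edges, (e.1 = G.maxv ∨ e.2.1 = G.maxv) → e.2.2 = 1 then 1 else 0

/-- A template: `minv(Γ) = 0` and every vertex `i` with `1 ≤ i ≤ ℓ(Γ) − 1` is strictly
covered by some edge from `j` to `k` with `j < i < k`. -/
def IsTemplate (G : LongEdgeGraph) : Prop :=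
  G.minv = 0 ∧ ∀ i, 1 ≤ i → i + 1 ≤ G.lengthG → ∃ e ∈ G.edges, e.1 < i ∧ i < e.2.1

/-- The shift `G_{(k)}` of a long-edge graph: every edge is moved `k` units to the right. -/
def shiftG (G : LongEdgeGraph) (k : ℕ) : LongEdgeGraph where
  edges := G.edges.map fun e => (e.1 + k, e.2.1 + k, e.2.2)
  valid := by
    intro e he
    rw [Multiset.mem_map] at he
    obtain ⟨a, ha, rfl⟩ := he
    obtain ⟨h1, h2, h3⟩ := G.valid a ha
    dsimp only
    refine ⟨by omega, h2, ?_⟩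
    rintro ⟨hc1, hc2⟩
    exact h3 ⟨by omega, hc2⟩

end LongEdgeGraph

/-!
Write `δ − λ̄_i` as the sum over the edges `e = (a, k, ρ)` of the slack `(k − a)ρ − 1 − w_i(e)`,
where `w_i(e)` is the contribution of `e` to `λ̄_i`. The slack of an edge is at least the number of
its interior vertices other than `i − 1` and `i`, and even at least the number of those other than
`i` unless `e` is a weight-one edge ending at `i`. In a template every vertex `1, …, ℓ − 1` is
interior to some edge, so counting the vertices `1, …, i − 1` bounds the sum below by `i − 1`; a
weight-one edge ending at `i` costs one unit, which an edge of weight at least two at `0` pays back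
when `ε_0 = 0`. The bound `ℓ − i − ε_1` is the same count for the graph reflected by `v ↦ ℓ − v`,
and the bound `0` is the count over the empty set.
-/

namespace LongEdgeGraph

open Finset

def IsLongEdge (e : ℕ × ℕ × ℕ) : Prop :=
  e.1 < e.2.1 ∧ 1 ≤ e.2.2 ∧ ¬(e.2.1 = e.1 + 1 ∧ e.2.2 = 1)

def cogenusTerm (e : ℕ × ℕ × ℕ) : ℤ := ((e.2.1 : ℤ) - e.1) * e.2.2 - 1

def lambarTerm (i : ℕ) (e : ℕ × ℕ × ℕ) : ℤ :=
  (if e.1 < i ∧ i ≤ e.2.1 then (e.2.2 : ℤ) else 0) - if e.1 + 1 = i ∧ e.2.1 = i then 1 else 0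

def slack (i : ℕ) (e : ℕ × ℕ × ℕ) : ℤ := cogenusTerm e - lambarTerm i e

theorem natCast_sum_map_filter {α : Type*} (s : Multiset α) (p : α → Prop) [DecidablePred p]
    (f : α → ℕ) :
    (((s.filter p).map f).sum : ℤ) = (s.map fun a => if p a then (f a : ℤ) else 0).sum := by
  induction s using Multiset.induction_on with
  | empty => simp
  | cons a s ih => by_cases h : p a <;> simp [h, ih]

theorem cogenus_eq_sum (G : LongEdgeGraph) : (G.cogenus : ℤ) = (G.edges.map cogenusTerm).sum := by
  rw [cogenus, Nat.cast_multiset_sum, Multiset.map_map]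
  refine congrArg _ (Multiset.map_congr rfl fun e he => ?_)
  obtain ⟨hlt, hρ, -⟩ := G.valid e he
  have hpos : 1 ≤ (e.2.1 - e.1) * e.2.2 := Nat.mul_pos (Nat.sub_pos_of_lt hlt) hρ
  simp [cogenusTerm, Nat.cast_sub hpos, Nat.cast_sub hlt.le]

theorem lambar_eq_sum (G : LongEdgeGraph) (i : ℕ) :
    (G.lambar i : ℤ) = (G.edges.map (lambarTerm i)).sum := by
  have hlam : (G.lam i : ℤ) =
      (G.edges.map fun e => if e.1 < i ∧ i ≤ e.2.1 then (e.2.2 : ℤ) else 0).sum :=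
    natCast_sum_map_filter _ _ _
  have hcard : (Multiset.card (G.edges.filter fun e => e.1 + 1 = i ∧ e.2.1 = i) : ℤ) =
      (G.edges.map fun e => if e.1 + 1 = i ∧ e.2.1 = i then (1 : ℤ) else 0).sum := by
    simpa using natCast_sum_map_filter G.edges (fun e => e.1 + 1 = i ∧ e.2.1 = i) fun _ => 1
  have hle : Multiset.card (G.edges.filter fun e => e.1 + 1 = i ∧ e.2.1 = i) ≤ G.lam i := by
    have := Multiset.sum_map_le_sum_map _ _ fun e he => by
      have := (G.valid e he).2.1
      show (if e.1 + 1 = i ∧ e.2.1 = i then (1 : ℤ) else 0) ≤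
        if e.1 < i ∧ i ≤ e.2.1 then (e.2.2 : ℤ) else 0
      split_ifs <;> omega
    exact_mod_cast hcard ▸ hlam ▸ this
  rw [lambar, Nat.cast_sub hle, hlam, hcard, ← Multiset.sum_map_sub]
  rfl

theorem cogenus_sub_lambar (G : LongEdgeGraph) (i : ℕ) :
    (G.cogenus : ℤ) - G.lambar i = (G.edges.map (slack i)).sum := by
  rw [cogenus_eq_sum, lambar_eq_sum, ← Multiset.sum_map_sub]
  rfl

section Covering

variable {ι : Type*} {α : Type*} [DecidableEq α]

theorem card_le_sum_of_covers (E : Multiset ι) (I : ι → Finset α) (g : ι → ℤ) (S : Finset α)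
    (hS : ∀ v ∈ S, ∃ e ∈ E, v ∈ I e) (hg : ∀ e ∈ E, (#(S ∩ I e) : ℤ) ≤ g e) :
    (#S : ℤ) ≤ (E.map g).sum := by
  induction E using Multiset.induction_on generalizing S with
  | empty =>
    simp only [Multiset.notMem_zero, false_and, exists_false] at hS
    simp [Finset.eq_empty_of_forall_notMem hS]
  | cons e E ih =>
    have hrest : (#(S \ I e) : ℤ) ≤ (E.map g).sum := by
      refine ih _ (fun v hv => ?_) fun e' he' => ?_
      · obtain ⟨e', he', hve'⟩ := hS v (sdiff_subset hv)
        rcases Multiset.mem_cons.mp he' with rfl | he'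
        · exact absurd hve' (mem_sdiff.mp hv).2
        · exact ⟨e', he', hve'⟩
      · refine le_trans ?_ (hg e' (Multiset.mem_cons_of_mem he'))
        exact_mod_cast card_le_card (inter_subset_inter_right sdiff_subset)
    have hsplit := card_inter_add_card_sdiff S (I e)
    rw [Multiset.map_cons, Multiset.sum_cons]
    have := hg e (Multiset.mem_cons_self e E)
    omega

theorem card_lt_sum_of_covers [DecidableEq ι] {E : Multiset ι} (I : ι → Finset α) (g : ι → ℤ)
    (S : Finset α) (hS : ∀ v ∈ S, ∃ e ∈ E, v ∈ I e) (hg : ∀ e ∈ E, (#(S ∩ I e) : ℤ) ≤ g e)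
    {f : ι} (hf : f ∈ E) (hfg : (#(S ∩ I f) : ℤ) < g f) :
    (#S : ℤ) < (E.map g).sum := by
  have hrest : (#(S \ I f) : ℤ) ≤ ((E.erase f).map g).sum := by
    refine card_le_sum_of_covers _ I g _ (fun v hv => ?_) fun e he => ?_
    · obtain ⟨e, he, hve⟩ := hS v (sdiff_subset hv)
      refine ⟨e, Multiset.mem_erase_of_ne ?_ |>.mpr he, hve⟩
      rintro rfl
      exact (mem_sdiff.mp hv).2 hve
    · refine le_trans ?_ (hg e (Multiset.mem_of_mem_erase he))
      exact_mod_cast card_le_card (inter_subset_inter_right sdiff_subset)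
  have hsplit := card_inter_add_card_sdiff S (I f)
  rw [← Multiset.cons_erase hf, Multiset.map_cons, Multiset.sum_cons]
  omega

end Covering

theorem card_inter_Ioo_lt {S : Finset ℕ} {a k x : ℕ} (hx : x ∈ Ioo a k) (hxS : x ∉ S) :
    #(S ∩ Ioo a k) < k - a - 1 :=
  Nat.card_Ioo a k ▸ card_lt_card ⟨inter_subset_right, fun h => hxS (mem_of_mem_inter_left (h hx))⟩

theorem card_inter_Ioo_lt_of_covers {S : Finset ℕ} {a k i : ℕ} (hcov : a < i ∧ i ≤ k)
    (hshort : ¬(a + 1 = i ∧ k = i)) (hi : i ∉ S) (hi' : k = i → i - 1 ∉ S) :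
    #(S ∩ Ioo a k) < k - a - 1 := by
  rcases hcov.2.lt_or_eq with hik | rfl
  · exact card_inter_Ioo_lt (mem_Ioo.mpr ⟨hcov.1, hik⟩) hi
  · exact card_inter_Ioo_lt (mem_Ioo.mpr ⟨by omega, by omega⟩) (hi' rfl)

theorem card_inter_Ioo_le_slack {S : Finset ℕ} {i : ℕ} {e : ℕ × ℕ × ℕ} (he : IsLongEdge e)
    (hi : i ∉ S) (hi' : e.2.1 = i → e.2.2 = 1 → i - 1 ∉ S) :
    (#(S ∩ Ioo e.1 e.2.1) : ℤ) ≤ slack i e := by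
  obtain ⟨a, k, ρ⟩ := e
  obtain ⟨hak, hρ, -⟩ := he
  dsimp only at *
  have hle : #(S ∩ Ioo a k) ≤ k - a - 1 := (card_le_card inter_subset_right).trans (Nat.card_Ioo a k).le
  simp only [slack, cogenusTerm, lambarTerm]
  split_ifs with hcov hshort
  · have : (k : ℤ) - a = 1 := by omega
    rw [this]
    omega
  · rcases (show ρ = 1 ∨ 2 ≤ ρ by omega) with rfl | hρ2
    · have := card_inter_Ioo_lt_of_covers hcov hshort hi fun hk => hi' hk rfl
      push_cast
      omega
    · have hk : (2 : ℤ) ≤ k - a := by omega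
      have hρ' : (2 : ℤ) ≤ ρ := by exact_mod_cast hρ2
      have : (#(S ∩ Ioo a k) : ℤ) ≤ k - a - 1 := by omega
      nlinarith
  · omega
  · have hk : (1 : ℤ) ≤ k - a := by omega
    have hρ' : (1 : ℤ) ≤ ρ := by exact_mod_cast hρ
    have : (#(S ∩ Ioo a k) : ℤ) ≤ k - a - 1 := by omega
    nlinarith

theorem card_inter_Ioo_lt_slack {S : Finset ℕ} {i : ℕ} {e : ℕ × ℕ × ℕ} (he : IsLongEdge e)
    (hρ : 2 ≤ e.2.2) (hi : i ∉ S) (hi' : i - 1 ∉ S) (hshort : ¬(e.1 + 1 = i ∧ e.2.1 = i)) :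
    (#(S ∩ Ioo e.1 e.2.1) : ℤ) < slack i e := by
  obtain ⟨a, k, ρ⟩ := e
  obtain ⟨hak, -, -⟩ := he
  dsimp only at *
  have hle : #(S ∩ Ioo a k) ≤ k - a - 1 := (card_le_card inter_subset_right).trans (Nat.card_Ioo a k).le
  have hρ' : (2 : ℤ) ≤ ρ := by exact_mod_cast hρ
  simp only [slack, cogenusTerm, lambarTerm, if_neg hshort, sub_zero]
  split_ifs with hcov
  · have := card_inter_Ioo_lt_of_covers hcov hshort hi fun _ => hi'
    have hk : (2 : ℤ) ≤ k - a := by omega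
    have : (#(S ∩ Ioo a k) : ℤ) ≤ k - a - 2 := by omega
    nlinarith
  · have hk : (1 : ℤ) ≤ k - a := by omega
    have : (#(S ∩ Ioo a k) : ℤ) ≤ k - a - 1 := by omega
    nlinarith

def reflect (L : ℕ) (e : ℕ × ℕ × ℕ) : ℕ × ℕ × ℕ := (L - e.2.1, L - e.1, e.2.2)

theorem IsLongEdge.reflect {e : ℕ × ℕ × ℕ} (he : IsLongEdge e) {L : ℕ} (hL : e.2.1 ≤ L) :
    IsLongEdge (reflect L e) := by
  obtain ⟨hlt, hρ, hlong⟩ := he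
  exact ⟨by simp only [LongEdgeGraph.reflect]; omega, hρ, by simp only [LongEdgeGraph.reflect]; omega⟩

theorem slack_reflect {e : ℕ × ℕ × ℕ} (he : IsLongEdge e) {L i : ℕ} (hL : e.2.1 ≤ L)
    (hi : i ≤ L + 1) : slack (L + 1 - i) (reflect L e) = slack i e := by
  obtain ⟨a, k, ρ⟩ := e
  obtain ⟨hak, -, -⟩ := he
  dsimp only at hak hL
  have hcov : (L - k < L + 1 - i ∧ L + 1 - i ≤ L - a) ↔ (a < i ∧ i ≤ k) := by omega
  have hshort : (L - k + 1 = L + 1 - i ∧ L - a = L + 1 - i) ↔ (a + 1 = i ∧ k = i) := by omega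
  have hlen : ((L - a : ℕ) : ℤ) - (L - k : ℕ) = (k : ℤ) - a := by omega
  simp only [slack, cogenusTerm, lambarTerm, reflect, hcov, hshort, hlen]

section EdgeMultiset

variable {E : Multiset (ℕ × ℕ × ℕ)} (hE : ∀ e ∈ E, IsLongEdge e)
include hE

theorem sum_slack_nonneg (i : ℕ) : 0 ≤ (E.map (slack i)).sum :=
  Multiset.sum_nonneg fun _ hx => by
    obtain ⟨e, he, rfl⟩ := Multiset.mem_map.mp hx
    exact (Int.natCast_nonneg _).trans
      (card_inter_Ioo_le_slack (S := ∅) (hE e he) (notMem_empty i) fun _ _ => notMem_empty _)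

theorem sub_one_sub_le_sum_slack {i ε : ℕ}
    (hcov : ∀ v, 1 ≤ v → v < i → ∃ e ∈ E, e.1 < v ∧ v < e.2.1)
    (hε : ε = 1 ∨ ∃ f ∈ E, f.1 = 0 ∧ 2 ≤ f.2.2) :
    (i : ℤ) - 1 - ε ≤ (E.map (slack i)).sum := by
  by_cases hbad : ∃ b ∈ E, b.2.1 = i ∧ b.2.2 = 1
  · obtain ⟨b, hb, hbi, hbρ⟩ := hbad
    obtain ⟨hlt, -, hlong⟩ := hE b hb
    -- `b` covers `b.1 + 1, …, i - 1` at cost `i - b.1 - 2`; the other edges cover `1, …, b.1`.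
    have hslack_b : slack i b = i - b.1 - 2 := by
      have hcov : b.1 < i ∧ i ≤ b.2.1 := by omega
      have hshort : ¬(b.1 + 1 = i ∧ b.2.1 = i) := by omega
      rw [slack, lambarTerm, if_pos hcov, if_neg hshort, cogenusTerm, hbi, hbρ]
      push_cast
      ring
    have hS : ∀ v ∈ Ico 1 (b.1 + 1), ∃ e ∈ E.erase b, v ∈ Ioo e.1 e.2.1 := by
      intro v hv
      obtain ⟨hv1, hv2⟩ := mem_Ico.mp hv
      obtain ⟨e, he, hve⟩ := hcov v hv1 (by omega)
      refine ⟨e, Multiset.mem_erase_of_ne ?_ |>.mpr he, mem_Ioo.mpr hve⟩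
      rintro rfl
      exact absurd hve.1 (by omega)
    have hle : ∀ e ∈ E.erase b, (#(Ico 1 (b.1 + 1) ∩ Ioo e.1 e.2.1) : ℤ) ≤ slack i e :=
      fun e he => card_inter_Ioo_le_slack (hE e (Multiset.mem_of_mem_erase he))
        (by simp only [mem_Ico]; omega) fun _ _ => by simp only [mem_Ico]; omega
    have hcard : (#(Ico 1 (b.1 + 1)) : ℤ) = b.1 := by simp
    rw [← Multiset.cons_erase hb, Multiset.map_cons, Multiset.sum_cons, hslack_b]
    rcases hε with rfl | ⟨f, hf, hf0, hfρ⟩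
    · have := card_le_sum_of_covers _ _ _ _ hS hle
      omega
    · have hfb : f ≠ b := fun h => by subst h; omega
      have := card_lt_sum_of_covers _ _ _ hS hle (Multiset.mem_erase_of_ne hfb |>.mpr hf)
        (card_inter_Ioo_lt_slack (hE f hf) hfρ (by simp only [mem_Ico]; omega)
          (by simp only [mem_Ico]; omega) (by omega))
      omega
  · push Not at hbad
    have := card_le_sum_of_covers E (fun e => Ioo e.1 e.2.1) (slack i) (Ico 1 i)
      (fun v hv => (hcov v (mem_Ico.mp hv).1 (mem_Ico.mp hv).2).imp fun _ ⟨he, hve⟩ =>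
        ⟨he, mem_Ioo.mpr hve⟩)
      fun e he => card_inter_Ioo_le_slack (hE e he) (by simp) fun hk hρ => absurd hρ (hbad e he hk)
    simp only [Nat.card_Ico] at this
    omega

theorem sub_sub_le_sum_slack {L i ε : ℕ} (hEL : ∀ e ∈ E, e.2.1 ≤ L) (hi : i ≤ L + 1)
    (hcov : ∀ v, i ≤ v → v < L → ∃ e ∈ E, e.1 < v ∧ v < e.2.1)
    (hε : ε = 1 ∨ ∃ f ∈ E, f.2.1 = L ∧ 2 ≤ f.2.2) :
    (L : ℤ) - i - ε ≤ (E.map (slack i)).sum := by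
  have hsum : ((E.map (reflect L)).map (slack (L + 1 - i))).sum = (E.map (slack i)).sum := by
    rw [Multiset.map_map]
    exact congrArg _ (Multiset.map_congr rfl fun e he => slack_reflect (hE e he) (hEL e he) hi)
  have := sub_one_sub_le_sum_slack
    (E := E.map (reflect L)) (i := L + 1 - i) (ε := ε)
    (by
      simp only [Multiset.mem_map]
      rintro _ ⟨e, he, rfl⟩
      exact (hE e he).reflect (hEL e he))
    (by
      intro v hv1 hvi
      obtain ⟨e, he, hve⟩ := hcov (L - v) (by omega) (by omega)
      have := hEL e he
      refine ⟨reflect L e, Multiset.mem_map_of_mem _ he, ?_⟩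
      simp only [reflect]
      omega)
    (by
      refine hε.imp_right fun ⟨f, hf, hfL, hfρ⟩ => ⟨reflect L f, Multiset.mem_map_of_mem _ hf, ?_, hfρ⟩
      simp [reflect, hfL])
  rw [hsum] at this
  push_cast [Nat.cast_sub hi] at this
  linarith

end EdgeMultiset

theorem snd_le_maxv {G : LongEdgeGraph} {e : ℕ × ℕ × ℕ} (he : e ∈ G.edges) : e.2.1 ≤ G.maxv := by
  refine le_csSup ⟨(G.edges.map fun e => e.2.1).sup, ?_⟩ ⟨e, he, Or.inr rfl⟩
  rintro _ ⟨e, he, rfl | rfl⟩ <;>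
    have := Multiset.le_sup (Multiset.mem_map_of_mem (fun e => e.2.1) he) <;>
    have := (G.valid e he).1 <;>
    omega

theorem eps0_eq_one_or {G : LongEdgeGraph} (hmin : G.minv = 0) :
    G.eps0 = 1 ∨ ∃ f ∈ G.edges, f.1 = 0 ∧ 2 ≤ f.2.2 := by
  unfold eps0
  split_ifs with h
  · exact Or.inl rfl
  · push Not at h
    obtain ⟨f, hf, hinc, hρ⟩ := h
    obtain ⟨hlt, hρ1, -⟩ := G.valid f hf
    rw [hmin] at hinc
    exact Or.inr ⟨f, hf, by omega, by omega⟩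

theorem eps1_eq_one_or (G : LongEdgeGraph) :
    G.eps1 = 1 ∨ ∃ f ∈ G.edges, f.2.1 = G.maxv ∧ 2 ≤ f.2.2 := by
  unfold eps1
  split_ifs with h
  · exact Or.inl rfl
  · push Not at h
    obtain ⟨f, hf, hinc, hρ⟩ := h
    obtain ⟨hlt, hρ1, -⟩ := G.valid f hf
    have := snd_le_maxv hf
    exact Or.inr ⟨f, hf, by omega, by omega⟩

end LongEdgeGraph

/-- if `Γ` is a template of cogenus `δ` and length `ℓ`, then for every
`i = 1, …, ℓ` one has `λ̄_i(Γ) ≤ min {δ, δ − (ℓ − i) + ε_1(Γ), δ + 1 − i + ε_0(Γ)}`. -/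
theorem template_lambar_bound (Γ : LongEdgeGraph) (hΓ : Γ.IsTemplate)
    (δ ℓ : ℕ) (hδ : Γ.cogenus = δ) (hℓ : Γ.lengthG = ℓ)
    (i : ℕ) (hi1 : 1 ≤ i) (hiℓ : i ≤ ℓ) :
    (Γ.lambar i : ℤ) ≤
      min (δ : ℤ)
        (min ((δ : ℤ) - ((ℓ : ℤ) - (i : ℤ)) + (Γ.eps1 : ℤ))
          ((δ : ℤ) + 1 - (i : ℤ) + (Γ.eps0 : ℤ))) := by
  obtain ⟨hmin, hcov⟩ := hΓ
  subst hδ hℓ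
  have hE : ∀ e ∈ Γ.edges, LongEdgeGraph.IsLongEdge e := Γ.valid
  have hmax : Γ.maxv = Γ.lengthG := by simp [LongEdgeGraph.lengthG, hmin]
  have hsum := Γ.cogenus_sub_lambar i
  have h0 := LongEdgeGraph.sum_slack_nonneg hE i
  have hleft := LongEdgeGraph.sub_one_sub_le_sum_slack hE (i := i)
    (fun v hv1 hvi => hcov v hv1 (by omega)) (LongEdgeGraph.eps0_eq_one_or hmin)
  have hright := LongEdgeGraph.sub_sub_le_sum_slack hE (L := Γ.lengthG) (i := i)
    (fun e he => hmax ▸ LongEdgeGraph.snd_le_maxv he) (by omega)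
    (fun v hiv hv => hcov v (by omega) (by omega)) (hmax ▸ LongEdgeGraph.eps1_eq_one_or Γ)
  simp only [le_min_iff]
  omega
end

section
/- Let Δ be an h-transverse polygon of height M whose width sequence β(Δ) = (β_0,…,β_M) is nonconstant, and suppose that every extremal edge of Δ has length at least E, for some integer E > 0. Then β_i ≥ min{d^t+i, E, d^b+M−i} for all 0 ≤ i ≤ M. In particular, β_i ≥ E for E ≤ i ≤ M−E; and if moreover M ≥ 2E, then β_i ≥ i for i ≤ E and β_i ≥ M−i for i ≥ M−E. -/
open scoped Classical


/-- An h-transverse polygon (up to lattice translation), encoded by its height `M ≥ 1`, its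
top and bottom widths `d^t` and `d^b`, and its left and right direction sequences `l, r`
(0-indexed: `l i`, resp. `r i`, is the slope of the normal vector on the left, resp. right,
side at half-integer height between levels `i` and `i+1`, read from top to bottom, for
`0 ≤ i < M`).  The right directions are nonincreasing and the left ones nondecreasing, the
widths at interior heights are positive, and the total width change matches `d^b`. -/
structure HTransverse where
  M : ℕ
  M_pos : 0 < M
  dt : ℕ
  db : ℕ
  l : ℕ → ℤ
  r : ℕ → ℤ
  r_antitone : ∀ ⦃i j : ℕ⦄, i ≤ j → j < M → r j ≤ r i
  l_monotone : ∀ ⦃i j : ℕ⦄, i ≤ j → j < M → l i ≤ l j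
  width_pos : ∀ i : ℕ, 0 < i → i < M → 0 < (dt : ℤ) + ∑ j ∈ Finset.range i, (r j - l j)
  width_closes : (dt : ℤ) + ∑ j ∈ Finset.range M, (r j - l j) = (db : ℤ)

/-- The partial-sum sequence `β(d^t, r − l)`:
`β_i = d^t + ∑_{j<i} (r_j − l_j)` for `0 ≤ i ≤ M`. -/
def betaOf (dt : ℤ) (l r : ℕ → ℤ) (i : ℕ) : ℤ :=
  dt + ∑ j ∈ Finset.range i, (r j - l j)

namespace HTransverse

/-- The width sequence `β(Δ)` of the polygon: the widths at integer heights, top to bottom. -/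
def beta (P : HTransverse) (i : ℕ) : ℤ := betaOf (P.dt : ℤ) P.l P.r i

/-- There is a vertex of `Δ` on the right side at level `N`, `0 < N < M` (an internal vertex
of the right boundary): the right direction changes there. -/
def IsRightVertex (P : HTransverse) (N : ℕ) : Prop :=
  0 < N ∧ N < P.M ∧ P.r (N - 1) ≠ P.r N

/-- There is a vertex of `Δ` on the left side at level `N`, `0 < N < M`. -/
def IsLeftVertex (P : HTransverse) (N : ℕ) : Prop :=
  0 < N ∧ N < P.M ∧ P.l (N - 1) ≠ P.l N

/-- There is an internal vertex of `Δ` at level `N` (on either side). -/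
def IsInternalVertex (P : HTransverse) (N : ℕ) : Prop :=
  P.IsRightVertex N ∨ P.IsLeftVertex N

/-- Every extremal edge of `Δ` has (lattice) length at least `E`: every internal vertex is at
level at least `E` from the top and at least `E` from the bottom. -/
def ExtremalGE (P : HTransverse) (E : ℤ) : Prop :=
  ∀ N, P.IsInternalVertex N → E ≤ (N : ℤ) ∧ (N : ℤ) + E ≤ (P.M : ℤ)

/-- Every internal edge of `Δ` has (lattice) length at least `E`: internal vertices on the
same side are at least `E` levels apart. -/
def InternalGE (P : HTransverse) (E : ℤ) : Prop :=
  (∀ N N', P.IsRightVertex N → P.IsRightVertex N' → N < N' → (N : ℤ) + E ≤ (N' : ℤ)) ∧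
  (∀ N N', P.IsLeftVertex N → P.IsLeftVertex N' → N < N' → (N : ℤ) + E ≤ (N' : ℤ))

end HTransverse

/-- `s` is a rearrangement of the first `M` entries of `s0`. -/
def IsRearrangement (M : ℕ) (s0 s : ℕ → ℤ) : Prop :=
  ∃ σ : Equiv.Perm (Fin M), ∀ i : Fin M, s (i : ℕ) = s0 ((σ i : ℕ))

/-- The cogenus `δ(l, r)` of a pair of integer sequences of length `M` (0-indexed):
`δ(l,r) = ∑_{(i,j) ∈ Rev(r)} (r_j − r_i) + ∑_{(i,j) ∈ Rev(−l)} (l_i − l_j)`. -/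
def cogenusLR (M : ℕ) (l r : ℕ → ℤ) : ℤ :=
  (∑ p ∈ (Finset.range M ×ˢ Finset.range M).filter (fun p => p.1 < p.2 ∧ r p.1 < r p.2),
      (r p.2 - r p.1)) +
  (∑ p ∈ (Finset.range M ×ˢ Finset.range M).filter (fun p => p.1 < p.2 ∧ l p.2 < l p.1),
      (l p.1 - l p.2))

/-!
The increments `β_{j+1} − β_j = r_j − l_j` are nonincreasing, and since no vertex lies within
`E` levels of the top or the bottom, the first `E` and the last `E` of them are constant. As `β`
is nonconstant, the top increments are `≥ 1` or the bottom ones are `≤ −1`. Hence at each level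
`i` either all increments above `i` are `≥ 0` and the top ones `≥ 1`, giving
`β_i ≥ d^t + min(i, E)`, or all increments below `i` are `≤ 0` and the bottom ones `≤ −1`,
giving `β_i ≥ d^b + min(M − i, E)`.
-/

open Finset

lemma natCast_card_le_sum_of_subset {ι R : Type*} [Semiring R] [PartialOrder R]
    [IsOrderedRing R] {S T : Finset ι} {f : ι → R} (hTS : T ⊆ S)
    (hS : ∀ j ∈ S, 0 ≤ f j) (hT : ∀ j ∈ T, 1 ≤ f j) : (#T : R) ≤ ∑ j ∈ S, f j :=
  calc (#T : R) = #T • (1 : R) := by rw [nsmul_one]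
    _ ≤ ∑ j ∈ T, f j := card_nsmul_le_sum T f 1 hT
    _ ≤ ∑ j ∈ S, f j := sum_le_sum_of_subset_of_nonneg hTS fun j hj _ => hS j hj

lemma eq_of_forall_succ_eq {α : Type*} {f : ℕ → α} {a b : ℕ}
    (h : ∀ n, a ≤ n → n < b → f (n + 1) = f n) (hab : a ≤ b) : f b = f a := by
  induction b, hab using Nat.le_induction with
  | base => rfl
  | succ b hab ih => rw [h b hab (lt_add_one b), ih fun n han hnb => h n han (by omega)]

namespace HTransverse

variable (P : HTransverse) {E i : ℕ}

def incr (j : ℕ) : ℤ := P.r j - P.l j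

lemma beta_eq_dt_add_sum (i : ℕ) : P.beta i = P.dt + ∑ j ∈ range i, P.incr j := rfl

lemma beta_eq_db_sub_sum (hi : i ≤ P.M) : P.beta i = P.db - ∑ j ∈ Ico i P.M, P.incr j := by
  have hsplit := sum_range_add_sum_Ico P.incr hi
  have hclose : (P.dt : ℤ) + ∑ j ∈ range P.M, P.incr j = P.db := P.width_closes
  rw [beta_eq_dt_add_sum]
  linarith

variable {P}

lemma incr_le_incr_of_le {j : ℕ} (hij : i ≤ j) (hj : j < P.M) : P.incr j ≤ P.incr i :=
  sub_le_sub (P.r_antitone hij hj) (P.l_monotone hij hj)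

lemma incr_eq_of_not_isInternalVertex {N : ℕ} (hN0 : 0 < N) (hNM : N < P.M)
    (hN : ¬ P.IsInternalVertex N) : P.incr N = P.incr (N - 1) := by
  simp only [IsInternalVertex, IsRightVertex, IsLeftVertex, not_or, not_and, not_not] at hN
  rw [incr, incr, hN.1 hN0 hNM, hN.2 hN0 hNM]

lemma incr_eq_incr_zero (hext : P.ExtremalGE E) {j : ℕ} (hjM : j < P.M) (hjE : j < E) :
    P.incr j = P.incr 0 :=
  eq_of_forall_succ_eq (fun n _ hnj => incr_eq_of_not_isInternalVertex (Nat.succ_pos n)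
    (by omega) fun hv => by have := hext _ hv; omega) (Nat.zero_le j)

lemma incr_eq_incr_last (hext : P.ExtremalGE E) {j : ℕ} (hjM : j < P.M) (hjE : P.M ≤ j + E) :
    P.incr j = P.incr (P.M - 1) :=
  (eq_of_forall_succ_eq (fun n hjn hnM => incr_eq_of_not_isInternalVertex (Nat.succ_pos n)
    (by omega) fun hv => by have := hext _ hv; omega) (by omega : j ≤ P.M - 1)).symm

lemma exists_incr_ne_zero (hnc : ∃ i j, i ≤ P.M ∧ j ≤ P.M ∧ P.beta i ≠ P.beta j) :
    ∃ m < P.M, P.incr m ≠ 0 := by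
  by_contra! hzero
  have hconst : ∀ n ≤ P.M, P.beta n = P.dt := fun n hn => by
    rw [beta_eq_dt_add_sum, sum_eq_zero fun j hj => hzero j (by simp at hj; omega), add_zero]
  obtain ⟨a, b, ha, hb, hab⟩ := hnc
  exact hab ((hconst a ha).trans (hconst b hb).symm)

variable (P)

def RisesTo (i : ℕ) : Prop := 1 ≤ P.incr 0 ∧ ∀ j < i, 0 ≤ P.incr j

def FallsFrom (i : ℕ) : Prop := P.incr (P.M - 1) ≤ -1 ∧ ∀ j, i ≤ j → j < P.M → P.incr j ≤ 0

variable {P}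

lemma risesTo_or_fallsFrom (hne : ∃ m < P.M, P.incr m ≠ 0) (hi : i ≤ P.M) :
    P.RisesTo i ∨ P.FallsFrom i := by
  have hlast : P.M - 1 < P.M := Nat.sub_one_lt_of_lt P.M_pos
  by_cases hup : ∀ j < i, 0 ≤ P.incr j
  · by_cases h0 : 1 ≤ P.incr 0
    · exact Or.inl ⟨h0, hup⟩
    · obtain ⟨m, hm, hm0⟩ := hne
      have hmneg : P.incr m < 0 := by have := incr_le_incr_of_le (Nat.zero_le m) hm; omega
      refine Or.inr ⟨?_, fun j _ hj => ?_⟩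
      · have := incr_le_incr_of_le (by omega : m ≤ P.M - 1) hlast; omega
      · have := incr_le_incr_of_le (Nat.zero_le j) hj; omega
  · push Not at hup
    obtain ⟨k, hki, hk⟩ := hup
    refine Or.inr ⟨?_, fun j hij hj => ?_⟩
    · have := incr_le_incr_of_le (by omega : k ≤ P.M - 1) hlast; omega
    · have := incr_le_incr_of_le (by omega : k ≤ j) hj; omega

lemma dt_add_min_le_beta (hext : P.ExtremalGE E) (hi : i ≤ P.M) (h : P.RisesTo i) :
    (P.dt : ℤ) + min i E ≤ P.beta i := by
  have hsum := natCast_card_le_sum_of_subset (range_subset_range.2 (min_le_left i E))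
    (fun j hj => h.2 j (mem_range.1 hj)) fun j hj => by
      have hj := mem_range.1 hj
      rw [incr_eq_incr_zero hext (by omega) (by omega)]
      exact h.1
  rw [card_range] at hsum
  rw [beta_eq_dt_add_sum]
  omega

lemma db_add_min_le_beta (hext : P.ExtremalGE E) (hi : i ≤ P.M) (h : P.FallsFrom i) :
    (P.db : ℤ) + min (P.M - i) E ≤ P.beta i := by
  have hsum := natCast_card_le_sum_of_subset (f := fun j => -P.incr j)
    (Ico_subset_Ico_left (le_max_left i (P.M - E)))
    (fun j hj => by have := h.2 j (mem_Ico.1 hj).1 (mem_Ico.1 hj).2; omega)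
    fun j hj => by
      have hj := mem_Ico.1 hj
      rw [incr_eq_incr_last hext hj.2 (by omega)]
      have := h.1
      omega
  rw [Nat.card_Ico, sum_neg_distrib] at hsum
  rw [beta_eq_db_sub_sum P hi]
  omega

lemma min_le_beta (hext : P.ExtremalGE E) (hne : ∃ m < P.M, P.incr m ≠ 0) (hi : i ≤ P.M) :
    min ((P.dt : ℤ) + i) (min (E : ℤ) ((P.db : ℤ) + P.M - i)) ≤ P.beta i := by
  rcases risesTo_or_fallsFrom hne hi with h | h
  · have := dt_add_min_le_beta hext hi h
    omega
  · have := db_add_min_le_beta hext hi h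
    omega

end HTransverse

theorem beta_lower_bounds_general (P : HTransverse) (E : ℕ)
    (hnc : ∃ i j, i ≤ P.M ∧ j ≤ P.M ∧ P.beta i ≠ P.beta j)
    (hext : P.ExtremalGE (E : ℤ)) :
    (∀ i, i ≤ P.M →
      min ((P.dt : ℤ) + (i : ℤ)) (min (E : ℤ) ((P.db : ℤ) + (P.M : ℤ) - (i : ℤ))) ≤ P.beta i) ∧
    (∀ i, E ≤ i → i ≤ P.M - E → (E : ℤ) ≤ P.beta i) ∧
    (2 * E ≤ P.M →
      (∀ i, i ≤ E → (i : ℤ) ≤ P.beta i) ∧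
      (∀ i, P.M - E ≤ i → i ≤ P.M → (P.M : ℤ) - (i : ℤ) ≤ P.beta i)) := by
  have hmin := fun i (hi : i ≤ P.M) =>
    HTransverse.min_le_beta hext (HTransverse.exists_incr_ne_zero hnc) hi
  refine ⟨hmin, fun i hEi hiM => ?_, fun h2E => ⟨fun i hiE => ?_, fun i hMi hiM => ?_⟩⟩ <;>
    have := hmin i (by omega) <;> omega

/-- let `Δ` be an h-transverse polygon of height `M` with nonconstant width
sequence `β(Δ)`, all of whose extremal edges have length at least `E > 0`.  Then
`β_i ≥ min {d^t + i, E, d^b + M − i}` for `0 ≤ i ≤ M`.  In particular `β_i ≥ E` for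
`E ≤ i ≤ M − E`; and if moreover `M ≥ 2E`, then `β_i ≥ i` for `i ≤ E` and `β_i ≥ M − i`
for `i ≥ M − E`. -/
theorem beta_lower_bounds (P : HTransverse) (E : ℕ) (hE : 0 < E)
    (hnc : ∃ i j, i ≤ P.M ∧ j ≤ P.M ∧ P.beta i ≠ P.beta j)
    (hext : P.ExtremalGE (E : ℤ)) :
    (∀ i, i ≤ P.M →
      min ((P.dt : ℤ) + (i : ℤ)) (min (E : ℤ) ((P.db : ℤ) + (P.M : ℤ) - (i : ℤ))) ≤ P.beta i) ∧
    (∀ i, E ≤ i → i ≤ P.M - E → (E : ℤ) ≤ P.beta i) ∧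
    (2 * E ≤ P.M →
      (∀ i, i ≤ E → (i : ℤ) ≤ P.beta i) ∧
      (∀ i, P.M - E ≤ i → i ≤ P.M → (P.M : ℤ) - (i : ℤ) ≤ P.beta i)) :=
  beta_lower_bounds_general P E hnc hext
end

section
/- Let l_0 and r_0 be integer sequences of length M, let (l,r) be a pair of rearrangements of l_0 and r_0, and suppose (l′,r′) is obtained from (l,r) by swapping a single adjacent reversed pair — either two consecutive entries r_i < r_{i+1} of r, or two consecutive entries l_i > l_{i+1} of l — whose two values differ by d. Then δ(l′,r′) = δ(l,r) − d. -/
open scoped Classical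


/-! Writing the reversal weight as `∑_{i<j} max (s_j - s_i) 0`, the adjacent transposition
`τ = (i i+1)` permutes the pairs `i < j` other than `(i, i+1)`, so composing with `τ` only turns
the term `max x 0` of that pair, `x = s_{i+1} - s_i`, into `max (-x) 0 = max x 0 - x`.
The cogenus is the reversal weight of `r` plus that of `-l`. -/

open Finset

/-- `∑_{(i,j) ∈ Rev(s)} (s_j − s_i)` over the first `M` entries of `s`. -/
def reversalWeight (M : ℕ) (s : ℕ → ℤ) : ℤ :=
  ∑ p ∈ (range M ×ˢ range M).filter (fun p => p.1 < p.2 ∧ s p.1 < s p.2), (s p.2 - s p.1)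

lemma cogenusLR_eq_reversalWeight_add (M : ℕ) (l r : ℕ → ℤ) :
    cogenusLR M l r = reversalWeight M r + reversalWeight M (-l) := by
  simp only [cogenusLR, reversalWeight, Pi.neg_apply, neg_lt_neg_iff, neg_sub_neg]

def increasingPairs (M : ℕ) : Finset (ℕ × ℕ) :=
  (range M ×ˢ range M).filter (fun p => p.1 < p.2)

lemma reversalWeight_eq_sum_max (M : ℕ) (s : ℕ → ℤ) :
    reversalWeight M s = ∑ p ∈ increasingPairs M, max (s p.2 - s p.1) 0 := by
  rw [reversalWeight, increasingPairs, ← filter_filter, sum_filter]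
  refine sum_congr rfl fun p _ => ?_
  split_ifs with h <;> omega

lemma mem_increasingPairs_erase_iff_swap {M i : ℕ} (hi : i + 1 < M) (p : ℕ × ℕ) :
    p ∈ (increasingPairs M).erase (i, i + 1) ↔
      (Equiv.swap (i + 1) i p.1, Equiv.swap (i + 1) i p.2) ∈
        (increasingPairs M).erase (i, i + 1) := by
  obtain ⟨a, b⟩ := p
  simp only [increasingPairs, mem_erase, mem_filter, mem_product, mem_range, ne_eq, Prod.ext_iff,
    Equiv.swap_apply_def]
  split_ifs <;> omega

lemma reversalWeight_comp_swap_succ {M i : ℕ} (hi : i + 1 < M) (s : ℕ → ℤ) :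
    reversalWeight M (s ∘ Equiv.swap (i + 1) i) = reversalWeight M s - (s (i + 1) - s i) := by
  have hmem : (i, i + 1) ∈ increasingPairs M := by
    simp only [increasingPairs, mem_filter, mem_product, mem_range]; omega
  set τ := Equiv.swap (i + 1) i
  have hrest : ∑ p ∈ (increasingPairs M).erase (i, i + 1), max (s (τ p.2) - s (τ p.1)) 0 =
      ∑ p ∈ (increasingPairs M).erase (i, i + 1), max (s p.2 - s p.1) 0 :=
    sum_equiv (τ.prodCongr τ) (mem_increasingPairs_erase_iff_swap hi) fun _ _ => rfl
  simp only [reversalWeight_eq_sum_max, ← add_sum_erase _ _ hmem, Function.comp_apply, hrest]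
  simp only [τ, Equiv.swap_apply_left, Equiv.swap_apply_right]
  have hpair := max_zero_sub_max_neg_zero_eq_self (s i - s (i + 1))
  rw [neg_sub] at hpair
  linarith

theorem cogenus_adjacent_swap_general (M : ℕ) (l r l' r' : ℕ → ℤ) (d : ℤ)
    (hswap :
      (∃ i, i + 1 < M ∧ r i < r (i + 1) ∧ d = r (i + 1) - r i ∧ l' = l ∧
        r' = Function.update (Function.update r i (r (i + 1))) (i + 1) (r i)) ∨
      (∃ i, i + 1 < M ∧ l (i + 1) < l i ∧ d = l i - l (i + 1) ∧ r' = r ∧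
        l' = Function.update (Function.update l i (l (i + 1))) (i + 1) (l i))) :
    cogenusLR M l' r' = cogenusLR M l r - d := by
  rcases hswap with ⟨i, hi, -, rfl, rfl, rfl⟩ | ⟨i, hi, -, rfl, rfl, rfl⟩
  · rw [← Equiv.comp_swap_eq_update, cogenusLR_eq_reversalWeight_add,
      cogenusLR_eq_reversalWeight_add, reversalWeight_comp_swap_succ hi]
    ring
  · rw [← Equiv.comp_swap_eq_update, cogenusLR_eq_reversalWeight_add,
      cogenusLR_eq_reversalWeight_add, ← Pi.neg_comp, reversalWeight_comp_swap_succ hi]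
    simp only [Pi.neg_apply]
    ring

/-- if `(l', r')` is obtained from a pair of rearrangements `(l, r)` of
`(l_0, r_0)` by swapping a single adjacent reversed pair (either consecutive entries
`r_i < r_{i+1}` of `r`, or consecutive entries `l_i > l_{i+1}` of `l`) whose values differ
by `d`, then `δ(l', r') = δ(l, r) − d`. -/
theorem cogenus_adjacent_swap (M : ℕ) (l0 r0 l r l' r' : ℕ → ℤ) (d : ℤ)
    (hl : IsRearrangement M l0 l) (hr : IsRearrangement M r0 r)
    (hswap :
      (∃ i, i + 1 < M ∧ r i < r (i + 1) ∧ d = r (i + 1) - r i ∧ l' = l ∧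
        r' = Function.update (Function.update r i (r (i + 1))) (i + 1) (r i)) ∨
      (∃ i, i + 1 < M ∧ l (i + 1) < l i ∧ d = l i - l (i + 1) ∧ r' = r ∧
        l' = Function.update (Function.update l i (l (i + 1))) (i + 1) (l i))) :
    cogenusLR M l' r' = cogenusLR M l r - d :=
  cogenus_adjacent_swap_general M l r l' r' d hswap
end

section
/- Let d^t be an integer, let r_0 be a nonincreasing integer sequence and l_0 a nondecreasing integer sequence, both of length M, and let r and l be rearrangements of r_0 and l_0 respectively. Write β(Δ) = β(d^t, r_0−l_0) = (β_0(Δ),…,β_M(Δ)) and β = β(d^t, r−l) = (β_0,…,β_M). Then β_j(Δ) ≥ β_j for every 0 ≤ j ≤ M, and δ(l,r) = ∑_{j=0}^{M} (β_j(Δ) − β_j). -/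
open scoped Classical


/-!
Let `s` be a rearrangement of an antitone sequence `s₀` and `t = s - s₀`, so `∑ t = 0`.
Since `2 x⁺ = |x| + x`, the pairwise distances `∑_{i<j} |s_j - s_i|` are invariant under
rearrangement, and `s₀` has no reversals, twice the reversal sum of `s` is
`∑_{i<j} (t_j - t_i) = 2 ∑_i i t_i`. Applied to `r` and `-l`, the cogenus becomes
`∑_i i (d_i - d⁰_i)` with `d = r - l`, `d⁰ = r₀ - l₀`; summing `β_j(Δ) - β_j` over `j ≤ M`
counts `d⁰_i - d_i` exactly `M - i` times, which gives the same value since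
`∑_i (d_i - d⁰_i) = 0`.
The inequality `β_j ≤ β_j(Δ)` is the rearrangement inequality applied to the indicator of a
prefix.
-/

open Finset

section PairSums

variable {β : Type*} [AddCommMonoid β]

theorem sum_filter_lt_range_product (M : ℕ) (f : ℕ → ℕ → β) :
    ∑ p ∈ (range M ×ˢ range M).filter (fun p => p.1 < p.2), f p.1 p.2 =
      ∑ j ∈ range M, ∑ i ∈ range j, f i j := by
  rw [sum_filter, sum_product, sum_comm]
  refine sum_congr rfl fun j hj => ?_
  rw [← sum_filter]
  congr 1
  ext i
  simp only [mem_filter, mem_range] at hj ⊢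
  omega

theorem sum_range_sum_range_eq_two_nsmul (M : ℕ) (g : ℕ → ℕ → β)
    (hsymm : ∀ i j, g i j = g j i) (hdiag : ∀ i, g i i = 0) :
    ∑ i ∈ range M, ∑ j ∈ range M, g i j = 2 • ∑ j ∈ range M, ∑ i ∈ range j, g i j := by
  induction M with
  | zero => simp
  | succ M ih =>
    simp only [sum_range_succ, sum_add_distrib, ih, hdiag, add_zero, smul_add, two_nsmul]
    simp only [hsymm M]
    abel

end PairSums

section WeightedSums

variable {R : Type*} [CommRing R]

theorem sum_range_succ_sum_range (M : ℕ) (u : ℕ → R) :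
    ∑ j ∈ range (M + 1), ∑ i ∈ range j, u i = ∑ i ∈ range M, ((M : R) - i) * u i := by
  induction M with
  | zero => simp
  | succ M ih =>
    rw [sum_range_succ, ih, sum_range_succ _ M, sum_range_succ (fun i => _ * u i)]
    have hweights : ∑ i ∈ range M, ((M : R) + 1 - i) * u i =
        ∑ i ∈ range M, ((M : R) - i) * u i + ∑ i ∈ range M, u i := by
      rw [← sum_add_distrib]
      exact sum_congr rfl fun i _ => by ring
    push_cast
    rw [hweights]
    ring

theorem sum_range_succ_sum_range_of_sum_eq_zero {M : ℕ} {u : ℕ → R}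
    (hu : ∑ i ∈ range M, u i = 0) :
    ∑ j ∈ range (M + 1), ∑ i ∈ range j, u i = -∑ i ∈ range M, (i : R) * u i := by
  simp only [sum_range_succ_sum_range, sub_mul, sum_sub_distrib, ← mul_sum, hu, mul_zero,
    zero_sub]

theorem sum_range_sum_range_sub_of_sum_eq_zero {M : ℕ} {u : ℕ → R}
    (hu : ∑ i ∈ range M, u i = 0) :
    ∑ j ∈ range M, ∑ i ∈ range j, (u j - u i) = 2 * ∑ i ∈ range M, (i : R) * u i := by
  have hprefix : ∑ j ∈ range M, ∑ i ∈ range j, u i = -∑ i ∈ range M, (i : R) * u i := by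
    rw [← sum_range_succ_sum_range_of_sum_eq_zero hu, sum_range_succ, hu, add_zero]
  simp only [sum_sub_distrib, sum_const, card_range, nsmul_eq_mul, hprefix]
  ring

end WeightedSums

namespace IsRearrangement

variable {M : ℕ} {s0 s : ℕ → ℤ}

theorem neg (h : IsRearrangement M s0 s) : IsRearrangement M (-s0) (-s) := by
  obtain ⟨σ, hσ⟩ := h
  exact ⟨σ, fun i => by simp [hσ i]⟩

theorem sum_comp {β : Type*} [AddCommMonoid β] (h : IsRearrangement M s0 s) (g : ℤ → β) :
    ∑ i ∈ range M, g (s i) = ∑ i ∈ range M, g (s0 i) := by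
  obtain ⟨σ, hσ⟩ := h
  simp only [sum_range, hσ]
  exact Equiv.sum_comp σ fun i : Fin M => g (s0 i)

theorem sum_eq (h : IsRearrangement M s0 s) : ∑ i ∈ range M, s i = ∑ i ∈ range M, s0 i :=
  h.sum_comp fun x => x

theorem sum_sum_comp {β : Type*} [AddCommMonoid β] (h : IsRearrangement M s0 s)
    (g : ℤ → ℤ → β) :
    ∑ i ∈ range M, ∑ j ∈ range M, g (s i) (s j) =
      ∑ i ∈ range M, ∑ j ∈ range M, g (s0 i) (s0 j) :=
  calc ∑ i ∈ range M, ∑ j ∈ range M, g (s i) (s j)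
      = ∑ i ∈ range M, ∑ j ∈ range M, g (s i) (s0 j) :=
        sum_congr rfl fun i _ => h.sum_comp (g (s i))
    _ = ∑ i ∈ range M, ∑ j ∈ range M, g (s0 i) (s0 j) :=
        h.sum_comp fun x => ∑ j ∈ range M, g x (s0 j)

theorem sum_range_le_of_antitone (hs0 : ∀ ⦃i j : ℕ⦄, i ≤ j → j < M → s0 j ≤ s0 i)
    (h : IsRearrangement M s0 s) {k : ℕ} (hk : k ≤ M) :
    ∑ i ∈ range k, s i ≤ ∑ i ∈ range k, s0 i := by
  obtain ⟨σ, hσ⟩ := h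
  let prefixIndicator : Fin M → ℤ := fun i => if (i : ℕ) < k then 1 else 0
  have hmonovary : Monovary prefixIndicator fun i => s0 i := by
    intro i j hij
    have hji : (j : ℕ) < i := by
      by_contra! hij'
      exact (hs0 hij' j.isLt).not_gt hij
    simp only [prefixIndicator]
    split_ifs <;> omega
  have hprefix (t : ℕ → ℤ) : ∑ i : Fin M, prefixIndicator i • t i = ∑ i ∈ range k, t i := by
    simp only [prefixIndicator, ite_smul, one_smul, zero_smul]
    rw [Fin.sum_univ_eq_sum_range (fun i => if i < k then t i else 0), ← sum_filter]
    congr 1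
    ext i
    simp only [mem_filter, mem_range]
    omega
  have := hmonovary.sum_smul_comp_perm_le_sum_smul (σ := σ)
  simp only [← hσ] at this
  rwa [hprefix s, hprefix s0] at this

end IsRearrangement

def reversalSum (M : ℕ) (s : ℕ → ℤ) : ℤ :=
  ∑ j ∈ range M, ∑ i ∈ range j, (s j - s i)⁺

theorem cogenusLR_eq_reversalSum (M : ℕ) (l r : ℕ → ℤ) :
    cogenusLR M l r = reversalSum M r + reversalSum M (-l) := by
  have hfilter (s : ℕ → ℤ) :
      ∑ p ∈ (range M ×ˢ range M).filter (fun p => p.1 < p.2 ∧ s p.1 < s p.2), (s p.2 - s p.1) =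
        reversalSum M s := by
    rw [← filter_filter, sum_filter,
      sum_filter_lt_range_product M fun i j => if s i < s j then s j - s i else 0]
    refine sum_congr rfl fun j _ => sum_congr rfl fun i _ => ?_
    split_ifs with hij
    · exact (posPart_of_nonneg (sub_nonneg.mpr hij.le)).symm
    · exact (posPart_of_nonpos (sub_nonpos.mpr (not_lt.mp hij))).symm
  rw [cogenusLR, hfilter r, ← hfilter (-l)]
  simp only [Pi.neg_apply, neg_lt_neg_iff, neg_sub_neg]

theorem reversalSum_eq_zero_of_antitone {M : ℕ} {s0 : ℕ → ℤ}
    (hs0 : ∀ ⦃i j : ℕ⦄, i ≤ j → j < M → s0 j ≤ s0 i) : reversalSum M s0 = 0 :=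
  sum_eq_zero fun _ hj => sum_eq_zero fun _ hi =>
    posPart_of_nonpos (sub_nonpos.mpr (hs0 (mem_range.mp hi).le (mem_range.mp hj)))

theorem two_mul_reversalSum (M : ℕ) (s : ℕ → ℤ) :
    2 * reversalSum M s =
      ∑ j ∈ range M, ∑ i ∈ range j, |s j - s i| + ∑ j ∈ range M, ∑ i ∈ range j, (s j - s i) := by
  simp only [reversalSum, mul_sum, ← sum_add_distrib, abs_add_eq_two_nsmul_posPart, two_nsmul,
    two_mul]

theorem IsRearrangement.reversalSum_eq {M : ℕ} {s0 s : ℕ → ℤ}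
    (hs0 : ∀ ⦃i j : ℕ⦄, i ≤ j → j < M → s0 j ≤ s0 i) (h : IsRearrangement M s0 s) :
    reversalSum M s = ∑ i ∈ range M, (i : ℤ) * (s i - s0 i) := by
  have hdist : ∑ j ∈ range M, ∑ i ∈ range j, |s j - s i| =
      ∑ j ∈ range M, ∑ i ∈ range j, |s0 j - s0 i| := by
    have hsymm (t : ℕ → ℤ) : ∀ i j, |t j - t i| = |t i - t j| := fun i j => abs_sub_comm _ _
    have hdiag (t : ℕ → ℤ) : ∀ i, |t i - t i| = 0 := by simp
    have := h.sum_sum_comp fun x y => |y - x|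
    rw [sum_range_sum_range_eq_two_nsmul M _ (hsymm s) (hdiag s),
      sum_range_sum_range_eq_two_nsmul M _ (hsymm s0) (hdiag s0)] at this
    simpa only [two_nsmul, ← two_mul, mul_eq_mul_left_iff, two_ne_zero, or_false] using this
  have hsum : ∑ i ∈ range M, (s i - s0 i) = 0 := by rw [sum_sub_distrib, h.sum_eq, sub_self]
  have hlinear : ∑ j ∈ range M, ∑ i ∈ range j, (s j - s i) -
      ∑ j ∈ range M, ∑ i ∈ range j, (s0 j - s0 i) =
        2 * ∑ i ∈ range M, (i : ℤ) * (s i - s0 i) := by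
    rw [← sum_range_sum_range_sub_of_sum_eq_zero hsum]
    simp only [← sum_sub_distrib]
    exact sum_congr rfl fun j _ => sum_congr rfl fun i _ => by ring
  have htwice := two_mul_reversalSum M s
  have htwice0 := two_mul_reversalSum M s0
  have hzero := reversalSum_eq_zero_of_antitone hs0
  linarith

/-- let `d^t` be an integer, `r_0` nonincreasing and `l_0` nondecreasing integer
sequences of length `M`, and `r`, `l` rearrangements of `r_0`, `l_0`.  Writing
`β(Δ) = β(d^t, r_0 − l_0)` and `β = β(d^t, r − l)`, one has `β_j(Δ) ≥ β_j` for all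
`0 ≤ j ≤ M`, and `δ(l, r) = ∑_{j=0}^{M} (β_j(Δ) − β_j)`. -/
theorem cogenus_eq_sum_beta_diff (M : ℕ) (dt : ℤ) (l0 r0 l r : ℕ → ℤ)
    (hr0 : ∀ ⦃i j : ℕ⦄, i ≤ j → j < M → r0 j ≤ r0 i)
    (hl0 : ∀ ⦃i j : ℕ⦄, i ≤ j → j < M → l0 i ≤ l0 j)
    (hl : IsRearrangement M l0 l) (hr : IsRearrangement M r0 r) :
    (∀ j, j ≤ M → betaOf dt l r j ≤ betaOf dt l0 r0 j) ∧
    cogenusLR M l r = ∑ j ∈ Finset.range (M + 1), (betaOf dt l0 r0 j - betaOf dt l r j) := by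
  have hnl0 : ∀ ⦃i j : ℕ⦄, i ≤ j → j < M → (-l0) j ≤ (-l0) i :=
    fun _ _ hij hj => neg_le_neg (hl0 hij hj)
  have hbeta (j : ℕ) : betaOf dt l0 r0 j - betaOf dt l r j =
      ∑ i ∈ range j, ((r0 i - r i) + ((-l0) i - (-l) i)) := by
    simp only [betaOf, Pi.neg_apply, sum_add_distrib, sum_sub_distrib, sum_neg_distrib]
    ring
  refine ⟨fun j hj => ?_, ?_⟩
  · have hr_prefix := hr.sum_range_le_of_antitone hr0 hj
    have hl_prefix := hl.neg.sum_range_le_of_antitone hnl0 hj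
    have hdiff := hbeta j
    simp only [Pi.neg_apply, sum_add_distrib, sum_sub_distrib, sum_neg_distrib] at hl_prefix hdiff
    linarith
  · have hsum : ∑ i ∈ range M, ((r0 i - r i) + ((-l0) i - (-l) i)) = 0 := by
      rw [sum_add_distrib, sum_sub_distrib, sum_sub_distrib, hr.sum_eq, hl.neg.sum_eq,
        sub_self, sub_self, add_zero]
    rw [sum_congr rfl fun j _ => hbeta j, sum_range_succ_sum_range_of_sum_eq_zero hsum,
      cogenusLR_eq_reversalSum, hr.reversalSum_eq hr0, hl.neg.reversalSum_eq hnl0,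
      ← sum_add_distrib, ← sum_neg_distrib]
    exact sum_congr rfl fun i _ => by ring
end

section
/- Let Δ be an h-transverse polygon of height M having internal vertices, with left and right direction sequences l_0 and r_0 and top width d^t, and let (l,r) be a reordering of (l_0, r_0). Fix an integer δ ≥ 0 and suppose that every extremal edge of Δ has length at least δ + δ(l,r). Write β = β(d^t, r−l) = (β_0,…,β_M) and let β(Δ) = (β_0(Δ),…,β_M(Δ)) be the width sequence of Δ. besides, β_i = β_i(Δ) whenever i ≤ δ or i ≥ M−δ, and β_i ≥ δ whenever δ < i < M−δ. -/
open scoped Classical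


/-!
A reordering `r` of the sorted right directions `r₀` loses at most the reversal sum `Rev(r)`:
the sum of any `i` of its entries exceeds its first `i` entries by at most that much. Hence
`β` falls short of `β(Δ)` by at most `δ(l, r)`, and between levels `e = δ + δ(l, r)` and `M - e`
the concave width sequence `β(Δ)` is at least `e` thanks to the internal vertex.

Above level `e` the directions of `Δ` are constant, so a shortfall of `r` at row `j < e` sits
before at least `e - j` maximal entries and costs `e - j` times as much in `Rev(r)`; this forces
`β_i = β_i(Δ)` for `i ≤ δ` and `β_i ≥ δ` for `δ < i ≤ e`. The bottom of `Δ` is the top of `Δ`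
turned upside down.
-/

open Finset

def revSum (M : ℕ) (r : ℕ → ℤ) : ℤ :=
  ∑ p ∈ (range M ×ˢ range M).filter (fun p => p.1 < p.2 ∧ r p.1 < r p.2), (r p.2 - r p.1)

theorem cogenusLR_eq_revSum (M : ℕ) (l r : ℕ → ℤ) :
    cogenusLR M l r = revSum M r + revSum M (-l) := by
  simp only [cogenusLR, revSum, Pi.neg_apply, neg_lt_neg_iff, neg_sub_neg]

theorem revSum_nonneg (M : ℕ) (r : ℕ → ℤ) : 0 ≤ revSum M r :=
  sum_nonneg fun p hp => by simp only [mem_filter] at hp; linarith [hp.2.2]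

theorem sum_le_revSum {M : ℕ} (r : ℕ → ℤ) {S : Finset (ℕ × ℕ)}
    (hS : ∀ p ∈ S, p.1 < p.2 ∧ p.2 < M) :
    ∑ p ∈ S, (r p.2 - r p.1) ≤ revSum M r := by
  rw [← sum_filter_add_sum_filter_not S (fun p => r p.1 < r p.2)]
  have hdesc : ∑ p ∈ S.filter (fun p => ¬ r p.1 < r p.2), (r p.2 - r p.1) ≤ 0 :=
    sum_nonpos fun p hp => by simp only [mem_filter] at hp; linarith [hp.2]
  have hasc : ∑ p ∈ S.filter (fun p => r p.1 < r p.2), (r p.2 - r p.1) ≤ revSum M r := by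
    refine sum_le_sum_of_subset_of_nonneg (fun p hp => ?_) fun p hp _ => ?_
    · simp only [mem_filter, mem_product, mem_range] at hp ⊢
      have := hS p hp.1
      omega
    · simp only [mem_filter] at hp
      linarith [hp.2.2]
  linarith

/-- Averaging over all `#t * #s` pairs `q < #B ≤ p` with `q ∈ t`, `p ∈ s` bounds
`∑ s - ∑ t` without choosing a matching between `s` and `t`. -/
theorem sum_le_sum_range_add_revSum {M : ℕ} (r : ℕ → ℤ) {B : Finset ℕ} (hB : B ⊆ range M) :
    ∑ p ∈ B, r p ≤ ∑ p ∈ range #B, r p + revSum M r := by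
  set s := B \ range #B
  set t := range #B \ B
  have hcard : #t = #s := card_sdiff_comm (card_range _)
  have hdiff : ∑ p ∈ B, r p - ∑ p ∈ range #B, r p = ∑ p ∈ s, r p - ∑ p ∈ t, r p :=
    sum_sdiff_sub_sum_sdiff.symm
  have hcross : ∑ q ∈ t ×ˢ s, (r q.2 - r q.1) = #s * (∑ p ∈ s, r p - ∑ p ∈ t, r p) := by
    simp only [sum_product, sum_sub_distrib, sum_const, nsmul_eq_mul, mul_sub, hcard, mul_sum]
  have hpairs : ∑ q ∈ t ×ˢ s, (r q.2 - r q.1) ≤ revSum M r := by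
    refine sum_le_revSum r fun q hq => ?_
    simp only [mem_product, mem_sdiff, mem_range, s, t] at hq
    have := mem_range.1 (hB hq.2.1)
    omega
  have := revSum_nonneg M r
  rcases s.eq_empty_or_nonempty with hs | hs
  · have ht : t = ∅ := card_eq_zero.mp (hcard.trans (card_eq_zero.mpr hs))
    rw [hs, ht, sum_empty, sub_zero] at hdiff
    linarith
  · have : (1 : ℤ) ≤ #s := by exact_mod_cast hs.card_pos
    nlinarith

/-- If `v` bounds `r` and is attained at least `E` times, then an entry `r j < v` with `j < E`
lies before at least `E - j` entries equal to `v`, each forming a reversal of weight `v - r j`. -/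
theorem sum_range_weighted_deficit_le_revSum {M E : ℕ} {r : ℕ → ℤ} {v : ℤ}
    (hv : ∀ p < M, r p ≤ v) (hE : E ≤ #{p ∈ range M | r p = v}) :
    ∑ j ∈ range E, ((E : ℤ) - j) * (v - r j) ≤ revSum M r := by
  set T := {p ∈ range M | r p = v}
  have hEM : E ≤ M := hE.trans ((card_filter_le _ _).trans (card_range M).le)
  have hterm : ∀ j ∈ range E, ((E : ℤ) - j) * (v - r j) ≤ #{p ∈ T | j < p} * (v - r j) := by
    intro j hj
    rw [mem_range] at hj
    rcases (hv j (by omega)).eq_or_lt with hjv | hjv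
    · simp [hjv]
    refine mul_le_mul_of_nonneg_right ?_ (by linarith)
    have hbefore : {p ∈ T | ¬ j < p} ⊆ range j := fun p hp => by
      simp only [T, mem_filter, mem_range] at hp ⊢
      have : p ≠ j := fun h => by rw [h] at hp; linarith [hp.1.2]
      omega
    have := card_filter_add_card_filter_not (s := T) (fun p => j < p)
    have := card_le_card hbefore
    rw [card_range] at this
    omega
  have hpairs : ∑ j ∈ range E, (#{p ∈ T | j < p} : ℤ) * (v - r j)
      = ∑ q ∈ {q ∈ range E ×ˢ T | q.1 < q.2}, (r q.2 - r q.1) := by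
    rw [sum_filter, sum_product]
    refine sum_congr rfl fun j _ => ?_
    rw [← sum_filter, ← nsmul_eq_mul, ← sum_const]
    exact sum_congr rfl fun p hp => by simp only [T, mem_filter] at hp; rw [hp.1.2]
  calc ∑ j ∈ range E, ((E : ℤ) - j) * (v - r j)
      ≤ ∑ j ∈ range E, (#{p ∈ T | j < p} : ℤ) * (v - r j) := sum_le_sum hterm
    _ ≤ revSum M r := by
      rw [hpairs]
      refine sum_le_revSum r fun q hq => ?_
      simp only [T, mem_filter, mem_product, mem_range] at hq
      omega

/-- The directions of the polygon turned upside down. -/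
def flipSeq (M : ℕ) (s : ℕ → ℤ) (j : ℕ) : ℤ := -s (M - 1 - j)

theorem revSum_flipSeq (M : ℕ) (r : ℕ → ℤ) : revSum M (flipSeq M r) = revSum M r := by
  unfold revSum
  refine sum_nbij' (fun p => (M - 1 - p.2, M - 1 - p.1)) (fun p => (M - 1 - p.2, M - 1 - p.1))
    ?_ ?_ ?_ ?_ ?_
  all_goals
    intro p hp
    simp only [mem_filter, mem_product, mem_range, flipSeq, neg_lt_neg_iff] at hp ⊢
  · exact ⟨⟨by omega, by omega⟩, by omega, hp.2.2⟩
  · refine ⟨⟨by omega, by omega⟩, by omega, ?_⟩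
    rw [Nat.sub_sub_self (by omega : p.1 ≤ M - 1), Nat.sub_sub_self (by omega : p.2 ≤ M - 1)]
    exact hp.2.2
  · ext <;> simp only <;> omega
  · ext <;> simp only <;> omega
  · ring

theorem cogenusLR_flipSeq (M : ℕ) (l r : ℕ → ℤ) :
    cogenusLR M (flipSeq M l) (flipSeq M r) = cogenusLR M l r := by
  have hneg : -flipSeq M l = flipSeq M (-l) := funext fun j => by simp [flipSeq]
  rw [cogenusLR_eq_revSum, cogenusLR_eq_revSum, hneg, revSum_flipSeq, revSum_flipSeq]

theorem flipSeq_ne_flipSeq_iff {M N : ℕ} {s : ℕ → ℤ} (hN0 : 0 < N) (hNM : N < M) :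
    flipSeq M s (N - 1) ≠ flipSeq M s N ↔ s (M - N - 1) ≠ s (M - N) := by
  rw [flipSeq, flipSeq, show M - 1 - (N - 1) = M - N by omega,
    show M - 1 - N = M - N - 1 by omega, ne_eq, neg_inj, ne_comm]

namespace IsRearrangement

variable {M : ℕ} {s0 s : ℕ → ℤ}

theorem flipSeq (h : IsRearrangement M s0 s) :
    IsRearrangement M (flipSeq M s0) (flipSeq M s) := by
  obtain ⟨σ, hσ⟩ := h
  refine ⟨Fin.revPerm.trans (σ.trans Fin.revPerm), fun i => ?_⟩
  have hi : M - 1 - i = Fin.rev i := by rw [Fin.val_rev]; omega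
  have hσi : M - 1 - Fin.rev (σ (Fin.rev i)) = σ (Fin.rev i) := by
    rw [Fin.val_rev]; have := (σ (Fin.rev i)).isLt; omega
  simp only [_root_.flipSeq, Equiv.trans_apply, Fin.revPerm_apply, hi, hσi, hσ]

theorem exists_injOn (h : IsRearrangement M s0 s) :
    ∃ g : ℕ → ℕ, Set.MapsTo g (range M) (range M) ∧ Set.InjOn g (range M) ∧
      ∀ q < M, s (g q) = s0 q := by
  obtain ⟨σ, hσ⟩ := h
  refine ⟨fun q => if hq : q < M then σ.symm ⟨q, hq⟩ else q, fun q hq => ?_,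
    fun a ha b hb hab => ?_, fun q hq => ?_⟩
  · simp only [coe_range, Set.mem_Iio] at hq ⊢
    simp [hq]
  · simp only [coe_range, Set.mem_Iio] at ha hb
    simpa [ha, hb, Fin.val_inj] using hab
  · simp [hq, hσ]

theorem sum_range_eq (h : IsRearrangement M s0 s) :
    ∑ j ∈ range M, s j = ∑ j ∈ range M, s0 j := by
  obtain ⟨σ, hσ⟩ := h
  rw [← Fin.sum_univ_eq_sum_range, ← Fin.sum_univ_eq_sum_range]
  simp only [hσ]
  exact Equiv.sum_comp σ fun i => s0 i

theorem le_of_forall_le {v : ℤ} (h : IsRearrangement M s0 s) (hv : ∀ q < M, s0 q ≤ v) :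
    ∀ p < M, s p ≤ v := by
  obtain ⟨σ, hσ⟩ := h
  intro p hp
  rw [show s p = s0 (σ ⟨p, hp⟩) from hσ ⟨p, hp⟩]
  exact hv _ (σ _).isLt

theorem le_card_filter_eq {E : ℕ} {v : ℤ} (h : IsRearrangement M s0 s) (hEM : E ≤ M)
    (hv : ∀ q < E, s0 q = v) : E ≤ #{p ∈ range M | s p = v} := by
  obtain ⟨g, hmaps, hinj, hg⟩ := h.exists_injOn
  calc E = #((range E).image g) := by
        rw [card_image_of_injOn (hinj.mono (by simpa using hEM)), card_range]
    _ ≤ #{p ∈ range M | s p = v} := card_le_card fun p hp => by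
        obtain ⟨q, hq, rfl⟩ := mem_image.mp hp
        rw [mem_range] at hq
        rw [mem_filter, hg q (by omega), hv q hq]
        exact ⟨hmaps (by simp only [coe_range, Set.mem_Iio]; omega), rfl⟩

theorem sum_range_le_add_revSum {i : ℕ} (h : IsRearrangement M s0 s) (hi : i ≤ M) :
    ∑ j ∈ range i, s0 j ≤ ∑ j ∈ range i, s j + revSum M s := by
  obtain ⟨g, hmaps, hinj, hg⟩ := h.exists_injOn
  have hinj' : Set.InjOn g (range i) := hinj.mono (by simpa using hi)
  have hB : (range i).image g ⊆ range M := fun p hp => by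
    obtain ⟨q, hq, rfl⟩ := mem_image.mp hp
    exact hmaps (by simp only [coe_range, Set.mem_Iio, mem_range] at hq ⊢; omega)
  have := sum_le_sum_range_add_revSum s hB
  rwa [sum_image hinj', card_image_of_injOn hinj', card_range,
    sum_congr rfl fun q hq => hg q (by rw [mem_range] at hq; omega)] at this

end IsRearrangement

theorem betaOf_eq_add_sum_Ico (dt : ℤ) (l r : ℕ → ℤ) {a b : ℕ} (hab : a ≤ b) :
    betaOf dt l r b = betaOf dt l r a + ∑ j ∈ Ico a b, (r j - l j) := by
  rw [betaOf, betaOf, ← sum_range_add_sum_Ico _ hab, add_assoc]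

theorem betaOf_flipSeq {M : ℕ} {dt db : ℤ} {l r : ℕ → ℤ} (hM : 0 < M)
    (hdb : betaOf dt l r M = db) {i : ℕ} (hi : i ≤ M) :
    betaOf db (flipSeq M l) (flipSeq M r) i = betaOf dt l r (M - i) := by
  have hreflect : ∑ j ∈ range i, (flipSeq M r j - flipSeq M l j)
      = -∑ j ∈ Ico (M - i) M, (r j - l j) := by
    have := sum_Ico_reflect (fun j => r j - l j) 0 (show i ≤ M - 1 + 1 by omega)
    rw [← range_eq_Ico, show M - 1 + 1 = M by omega, Nat.sub_zero] at this
    simp only [flipSeq, neg_sub_neg, ← this, ← sum_neg_distrib, neg_sub]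
  rw [← hdb, betaOf_eq_add_sum_Ico dt l r (Nat.sub_le M i), betaOf, hreflect]
  ring

theorem betaOf_le_betaOf_add_cogenusLR {M i : ℕ} {dt : ℤ} {l0 r0 l r : ℕ → ℤ}
    (hl : IsRearrangement M l0 l) (hr : IsRearrangement M r0 r) (hi : i ≤ M) :
    betaOf dt l0 r0 i ≤ betaOf dt l r i + cogenusLR M l r := by
  have hrsum := hr.sum_range_le_add_revSum hi
  have hlsum := hl.neg.sum_range_le_add_revSum hi
  simp only [Pi.neg_apply, sum_neg_distrib] at hlsum
  rw [cogenusLR_eq_revSum, betaOf, betaOf, sum_sub_distrib, sum_sub_distrib]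
  linarith

theorem apply_eq_apply_zero_of_lt {s : ℕ → ℤ} {K : ℕ}
    (h : ∀ n, 0 < n → n < K → s (n - 1) = s n) {j : ℕ} (hj : j < K) : s j = s 0 := by
  induction j with
  | zero => rfl
  | succ j ih => rw [← h (j + 1) (by omega) hj, Nat.add_sub_cancel, ih (by omega)]

theorem mul_sum_range_le_sum_range_sub_mul {e i : ℕ} {g : ℕ → ℤ} (hg : ∀ j < e, 0 ≤ g j)
    (hi : i ≤ e) :
    ((e : ℤ) - i + 1) * ∑ j ∈ range i, g j ≤ ∑ j ∈ range e, ((e : ℤ) - j) * g j := by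
  rw [mul_sum]
  calc ∑ j ∈ range i, ((e : ℤ) - i + 1) * g j ≤ ∑ j ∈ range i, ((e : ℤ) - j) * g j :=
        sum_le_sum fun j hj => by
          rw [mem_range] at hj
          exact mul_le_mul_of_nonneg_right (by omega) (hg j (by omega))
    _ ≤ ∑ j ∈ range e, ((e : ℤ) - j) * g j :=
        sum_le_sum_of_subset_of_nonneg (range_subset_range.2 hi) fun j hj _ => by
          rw [mem_range] at hj
          exact mul_nonneg (by omega) (hg j hj)

theorem top_deficit_bounds {δ e i : ℕ} {dt a D : ℤ} (hdt : 0 ≤ dt) (hwidth : e ≤ dt + e * a)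
    (hD0 : 0 ≤ D) (hD : ((e : ℤ) - i + 1) * D ≤ e - δ) (hie : i ≤ e) :
    (i ≤ δ → D = 0) ∧ (δ < i → δ ≤ dt + i * a - D) := by
  refine ⟨fun _ => by nlinarith, fun hδi => ?_⟩
  rcases le_or_gt a 0 with ha | ha
  · nlinarith
  have hDi : D ≤ i - δ := by
    by_contra! hDi
    nlinarith [mul_nonneg (show (0 : ℤ) ≤ e - i by omega) (show (0 : ℤ) ≤ D - 1 by omega)]
  nlinarith

namespace HTransverse

def flip (P : HTransverse) : HTransverse where
  M := P.M
  M_pos := P.M_pos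
  dt := P.db
  db := P.dt
  l := flipSeq P.M P.l
  r := flipSeq P.M P.r
  r_antitone _ _ hij hj := neg_le_neg (P.r_antitone (by omega) (by omega))
  l_monotone _ _ hij hj := neg_le_neg (P.l_monotone (by omega) (by omega))
  width_pos i hi0 hiM := by
    have hflip := betaOf_flipSeq P.M_pos P.width_closes hiM.le
    have hpos := P.width_pos (P.M - i) (by omega) (by omega)
    rw [betaOf, betaOf] at hflip
    linarith
  width_closes := by
    have hflip := betaOf_flipSeq P.M_pos P.width_closes le_rfl
    rwa [Nat.sub_self, betaOf, betaOf, range_zero, sum_empty, add_zero] at hflip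

variable {P : HTransverse}

@[simp] theorem flip_M : P.flip.M = P.M := rfl

theorem beta_flip {i : ℕ} (hi : i ≤ P.M) : P.flip.beta i = P.beta (P.M - i) :=
  betaOf_flipSeq P.M_pos P.width_closes hi

theorem beta_eq_add_sum_Ico {a b : ℕ} (hab : a ≤ b) :
    P.beta b = P.beta a + ∑ j ∈ Ico a b, (P.r j - P.l j) :=
  betaOf_eq_add_sum_Ico _ _ _ hab

theorem sub_antitone {i j : ℕ} (hij : i ≤ j) (hj : j < P.M) :
    P.r j - P.l j ≤ P.r i - P.l i := by
  linarith [P.r_antitone hij hj, P.l_monotone hij hj]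

theorem IsInternalVertex.pos_lt {N : ℕ} (hN : P.IsInternalVertex N) : 0 < N ∧ N < P.M :=
  hN.elim (fun h => ⟨h.1, h.2.1⟩) fun h => ⟨h.1, h.2.1⟩

theorem IsInternalVertex.sub_lt {N : ℕ} (hN : P.IsInternalVertex N) :
    P.r N - P.l N < P.r (N - 1) - P.l (N - 1) := by
  obtain ⟨hN0, hNM⟩ := hN.pos_lt
  have hr := P.r_antitone (Nat.sub_le N 1) hNM
  have hl := P.l_monotone (Nat.sub_le N 1) hNM
  rcases hN with h | h
  · have := h.2.2; omega
  · have := h.2.2; omega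

theorem isInternalVertex_flip {N : ℕ} :
    P.flip.IsInternalVertex N ↔ P.IsInternalVertex (P.M - N) := by
  have hflip {s : ℕ → ℤ} : (0 < N ∧ N < P.M ∧ flipSeq P.M s (N - 1) ≠ flipSeq P.M s N) ↔
      (0 < P.M - N ∧ P.M - N < P.M ∧ s (P.M - N - 1) ≠ s (P.M - N)) := by
    constructor
    · rintro ⟨hN0, hNM, hne⟩
      exact ⟨by omega, by omega, (flipSeq_ne_flipSeq_iff hN0 hNM).1 hne⟩
    · rintro ⟨hN0, hNM, hne⟩
      exact ⟨by omega, by omega, (flipSeq_ne_flipSeq_iff (by omega) (by omega)).2 hne⟩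
  exact or_congr hflip hflip

theorem ExtremalGE.flip {E : ℤ} (h : P.ExtremalGE E) : P.flip.ExtremalGE E := fun N hN => by
  have hNM := hN.pos_lt.2
  have := h _ (isInternalVertex_flip.1 hN)
  simp only [flip_M] at hNM ⊢
  omega

theorem eq_top_directions_of_extremalGE {e : ℕ} (hext : P.ExtremalGE e) (heM : e ≤ P.M)
    {j : ℕ} (hj : j < e) : P.r j = P.r 0 ∧ P.l j = P.l 0 :=
  ⟨apply_eq_apply_zero_of_lt (fun n hn0 hne => not_not.1 fun hv => by
      have := (hext n (Or.inl ⟨hn0, by omega, hv⟩)).1; omega) hj,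
    apply_eq_apply_zero_of_lt (fun n hn0 hne => not_not.1 fun hv => by
      have := (hext n (Or.inr ⟨hn0, by omega, hv⟩)).1; omega) hj⟩

/-- Either the width grows by at least one per level up to level `e`, or it shrinks by at least
one per level below the vertex `N`. -/
theorem le_beta_of_isInternalVertex {e N : ℕ} (hN : P.IsInternalVertex N) (heN : e ≤ N)
    (hNe : N + e ≤ P.M) : (e : ℤ) ≤ P.beta e := by
  by_cases hsteep : ∀ j < e, 1 ≤ P.r j - P.l j
  · have hsum : (e : ℤ) ≤ ∑ j ∈ range e, (P.r j - P.l j) := by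
      simpa using card_nsmul_le_sum (range e) _ 1 fun j hj => hsteep j (mem_range.1 hj)
    have : (0 : ℤ) ≤ P.dt := P.dt.cast_nonneg
    rw [beta, betaOf]
    linarith
  push Not at hsteep
  obtain ⟨j, hje, hj⟩ := hsteep
  have hNM := hN.pos_lt.2
  have hdrop := hN.sub_lt
  have hflat : ∑ k ∈ Ico e N, (P.r k - P.l k) ≤ 0 := sum_nonpos fun k hk => by
    rw [mem_Ico] at hk
    linarith [P.sub_antitone (show j ≤ k by omega) (show k < P.M by omega)]
  have hdesc : ∑ k ∈ Ico N P.M, (P.r k - P.l k) ≤ -(P.M - N : ℕ) := by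
    have := sum_le_card_nsmul (Ico N P.M) (fun k => P.r k - P.l k) (-1) fun k hk => by
      rw [mem_Ico] at hk
      linarith [P.sub_antitone hk.1 hk.2,
        P.sub_antitone (show j ≤ N - 1 by omega) (show N - 1 < P.M by omega)]
    simpa using this
  have hbottom := P.beta_eq_add_sum_Ico (show N ≤ P.M by omega)
  have hmiddle := P.beta_eq_add_sum_Ico heN
  have hclose : P.beta P.M = P.db := P.width_closes
  have : (0 : ℤ) ≤ P.db := P.db.cast_nonneg
  push_cast [show N ≤ P.M by omega] at hdesc
  linarith

theorem min_le_beta_s7 {a i b : ℕ} (hai : a ≤ i) (hib : i ≤ b) (hbM : b ≤ P.M) :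
    min (P.beta a) (P.beta b) ≤ P.beta i := by
  have hleft := P.beta_eq_add_sum_Ico hai
  have hright := P.beta_eq_add_sum_Ico hib
  by_cases hup : ∀ j ∈ Ico a i, 0 ≤ P.r j - P.l j
  · linarith [min_le_left (P.beta a) (P.beta b), sum_nonneg hup]
  push Not at hup
  obtain ⟨j, hj, hneg⟩ := hup
  rw [mem_Ico] at hj
  have : ∑ k ∈ Ico i b, (P.r k - P.l k) ≤ 0 := sum_nonpos fun k hk => by
    rw [mem_Ico] at hk
    linarith [P.sub_antitone (show j ≤ k by omega) (show k < P.M by omega)]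
  linarith [min_le_right (P.beta a) (P.beta b)]

/-- The width bound at level `M - e` is the one at level `e` for the flipped polygon; in between,
the width is concave. -/
theorem le_beta {e N i : ℕ} (hN : P.IsInternalVertex N) (heN : e ≤ N) (hNe : N + e ≤ P.M)
    (hei : e ≤ i) (hie : i + e ≤ P.M) : (e : ℤ) ≤ P.beta i := by
  have hNM := hN.pos_lt.2
  have htop := le_beta_of_isInternalVertex hN heN hNe
  have hbot : (e : ℤ) ≤ P.beta (P.M - e) := by
    rw [← beta_flip (by omega)]
    have hN' : P.flip.IsInternalVertex (P.M - N) := by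
      rwa [isInternalVertex_flip, Nat.sub_sub_self hNM.le]
    exact le_beta_of_isInternalVertex hN' (by omega) (by simp only [flip_M]; omega)
  exact (le_min htop hbot).trans (min_le_beta_s7 hei (by omega) (by omega))

end HTransverse

/-- Above level `e` the polygon has directions `(P.l 0, P.r 0)`; the reordering can only fall
short of them, by `g j ≥ 0` in row `j`, and the cogenus weighs the shortfall in row `j` by
`e - j`. -/
theorem betaOf_bounds_of_le_extremal {P : HTransverse} {l r : ℕ → ℤ}
    (hl : IsRearrangement P.M P.l l) (hr : IsRearrangement P.M P.r r) {δ e N : ℕ}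
    (he : (e : ℤ) = δ + cogenusLR P.M l r) (hext : P.ExtremalGE e)
    (hN : P.IsInternalVertex N) {i : ℕ} (hie : i ≤ e) :
    (i ≤ δ → betaOf P.dt l r i = P.beta i) ∧ (δ < i → δ ≤ betaOf P.dt l r i) := by
  obtain ⟨heN, hNe⟩ : e ≤ N ∧ N + e ≤ P.M := by have := hext N hN; omega
  have hconst : ∀ j < e, P.r j = P.r 0 ∧ P.l j = P.l 0 := fun j hj =>
    P.eq_top_directions_of_extremalGE hext (by omega) hj
  set a := P.r 0 - P.l 0
  set g : ℕ → ℤ := fun j => (P.r 0 - r j) + (l j - P.l 0)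
  have hr_le := hr.le_of_forall_le fun q hq => P.r_antitone (Nat.zero_le q) hq
  have hl_le := hl.neg.le_of_forall_le fun q hq => neg_le_neg (P.l_monotone (Nat.zero_le q) hq)
  have hg : ∀ j < e, 0 ≤ g j := fun j hj => by
    linarith [hr_le j (by omega), hl_le j (by omega), Pi.neg_apply l j]
  have hweight : ∑ j ∈ range e, ((e : ℤ) - j) * g j ≤ e - δ := by
    have hrw := sum_range_weighted_deficit_le_revSum hr_le
      (hr.le_card_filter_eq (by omega) fun q hq => (hconst q hq).1)
    have hlw := sum_range_weighted_deficit_le_revSum (E := e) hl_le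
      (hl.neg.le_card_filter_eq (by omega) fun q hq => by simp [(hconst q hq).2])
    rw [cogenusLR_eq_revSum] at he
    simp only [Pi.neg_apply, neg_sub_neg] at hlw
    simp only [g, mul_add, sum_add_distrib]
    linarith
  have hbeta : betaOf P.dt l r i = P.dt + i * a - ∑ j ∈ range i, g j := by
    simp only [betaOf, g, a, sum_add_distrib, sum_sub_distrib, sum_const, card_range,
      nsmul_eq_mul]
    ring
  have hbetaP : ∀ k ≤ e, P.beta k = P.dt + k * a := fun k hk => by
    have hrow : ∀ j ∈ range k, P.r j - P.l j = a := fun j hj => by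
      obtain ⟨hrj, hlj⟩ := hconst j (by rw [mem_range] at hj; omega)
      rw [hrj, hlj]
    rw [HTransverse.beta, betaOf, sum_congr rfl hrow, sum_const, card_range, nsmul_eq_mul]
  have hwidth : (e : ℤ) ≤ P.dt + e * a := hbetaP e le_rfl ▸ P.le_beta hN heN hNe le_rfl (by omega)
  have hD0 : 0 ≤ ∑ j ∈ range i, g j :=
    sum_nonneg fun j hj => hg j (by rw [mem_range] at hj; omega)
  have hdeficit := top_deficit_bounds P.dt.cast_nonneg hwidth hD0
    ((mul_sum_range_le_sum_range_sub_mul hg hie).trans hweight) hie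
  rw [hbeta]
  exact ⟨fun hiδ => by rw [hbetaP i hie, hdeficit.1 hiδ, sub_zero], hdeficit.2⟩

theorem betaOf_bounds_of_two_mul_le {P : HTransverse} {N : ℕ} (hN : P.IsInternalVertex N)
    {l r : ℕ → ℤ} (hl : IsRearrangement P.M P.l l) (hr : IsRearrangement P.M P.r r) {δ : ℕ}
    (hext : P.ExtremalGE ((δ : ℤ) + cogenusLR P.M l r)) {i : ℕ} (hi : 2 * i ≤ P.M) :
    (i ≤ δ → betaOf P.dt l r i = P.beta i) ∧ (δ < i → δ ≤ betaOf P.dt l r i) := by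
  have hcogenus : 0 ≤ cogenusLR P.M l r := by
    rw [cogenusLR_eq_revSum]
    linarith [revSum_nonneg P.M r, revSum_nonneg P.M (-l)]
  obtain ⟨e, he⟩ : ∃ e : ℕ, (e : ℤ) = δ + cogenusLR P.M l r :=
    ⟨_, Int.toNat_of_nonneg (by omega)⟩
  rw [← he] at hext
  rcases le_or_gt i e with hie | hei
  · exact betaOf_bounds_of_le_extremal hl hr he hext hN hie
  obtain ⟨heN, hNe⟩ : e ≤ N ∧ N + e ≤ P.M := by have := hext N hN; omega
  have hmid := betaOf_le_betaOf_add_cogenusLR (dt := P.dt) hl hr (show i ≤ P.M by omega)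
  have hwidth := P.le_beta hN heN hNe hei.le (by omega)
  exact ⟨fun _ => by omega, fun _ => by rw [HTransverse.beta] at hwidth; linarith⟩

theorem betaOf_bounds_of_le_two_mul {P : HTransverse} {N : ℕ} (hN : P.IsInternalVertex N)
    {l r : ℕ → ℤ} (hl : IsRearrangement P.M P.l l) (hr : IsRearrangement P.M P.r r) {δ : ℕ}
    (hext : P.ExtremalGE ((δ : ℤ) + cogenusLR P.M l r)) {i : ℕ} (hiM : i ≤ P.M)
    (hi : P.M ≤ 2 * i) :
    (P.M ≤ i + δ → betaOf P.dt l r i = P.beta i) ∧ (i + δ < P.M → δ ≤ betaOf P.dt l r i) := by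
  have hN' : P.flip.IsInternalVertex (P.M - N) := by
    rwa [HTransverse.isInternalVertex_flip, Nat.sub_sub_self hN.pos_lt.2.le]
  have hext' : P.flip.ExtremalGE
      ((δ : ℤ) + cogenusLR P.flip.M (flipSeq P.M l) (flipSeq P.M r)) := by
    rw [HTransverse.flip_M, cogenusLR_flipSeq]
    exact hext.flip
  have hclose : betaOf P.dt l r P.M = P.db := by
    rw [← P.width_closes, betaOf, sum_sub_distrib, sum_sub_distrib, hl.sum_range_eq,
      hr.sum_range_eq]
  have hflipped := betaOf_bounds_of_two_mul_le hN' hl.flipSeq hr.flipSeq hext'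
    (i := P.M - i) (by simp only [HTransverse.flip_M]; omega)
  rw [HTransverse.beta_flip (Nat.sub_le _ _), Nat.sub_sub_self hiM] at hflipped
  have hβ : betaOf P.flip.dt (flipSeq P.M l) (flipSeq P.M r) (P.M - i) = betaOf P.dt l r i :=
    (betaOf_flipSeq P.M_pos hclose (Nat.sub_le _ _)).trans (by rw [Nat.sub_sub_self hiM])
  rw [hβ] at hflipped
  exact ⟨fun h => hflipped.1 (by omega), fun h => hflipped.2 (by omega)⟩

/-- let `Δ` be an h-transverse polygon of height `M` having internal vertices,
`(l, r)` a reordering of `(l_0, r_0)`, and `δ ≥ 0` with every extremal edge of `Δ` of length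
at least `δ + δ(l, r)`.  Writing `β = β(d^t, r − l)` and `β(Δ)` for the width sequence, one
has `β_i = β_i(Δ)` whenever `i ≤ δ` or `i ≥ M − δ`, and `β_i ≥ δ` whenever `δ < i < M − δ`. -/
theorem beta_of_reordering_bounds (P : HTransverse)
    (hIV : ∃ N, P.IsInternalVertex N)
    (l r : ℕ → ℤ) (hl : IsRearrangement P.M P.l l) (hr : IsRearrangement P.M P.r r)
    (δ : ℕ) (hext : P.ExtremalGE ((δ : ℤ) + cogenusLR P.M l r)) :
    (∀ i, i ≤ P.M → ((i : ℤ) ≤ (δ : ℤ) ∨ (P.M : ℤ) - (δ : ℤ) ≤ (i : ℤ)) →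
      betaOf (P.dt : ℤ) l r i = P.beta i) ∧
    (∀ i, i ≤ P.M → (δ : ℤ) < (i : ℤ) → (i : ℤ) < (P.M : ℤ) - (δ : ℤ) →
      (δ : ℤ) ≤ betaOf (P.dt : ℤ) l r i) := by
  obtain ⟨N, hN⟩ := hIV
  refine ⟨fun i hi hends => ?_, fun i hi hlow hhigh => ?_⟩
  · rcases le_total (2 * i) P.M with h2 | h2
    · exact (betaOf_bounds_of_two_mul_le hN hl hr hext h2).1 (by omega)
    · exact (betaOf_bounds_of_le_two_mul hN hl hr hext hi h2).1 (by omega)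
  · rcases le_total (2 * i) P.M with h2 | h2
    · exact (betaOf_bounds_of_two_mul_le hN hl hr hext h2).2 (by omega)
    · exact (betaOf_bounds_of_le_two_mul hN hl hr hext hi h2).2 (by omega)
end

section
/- Let ℓ ≥ 1 and let η_0, η_1, …, η_ℓ be rational numbers. Set ζ^i = ∑_{j=1}^{ℓ} C(j−1,i) η_j and ζ̄^i = ∑_{j=1}^{ℓ} C(j−1,i) η_{ℓ+1−j} for i = 0,1,2 (binomial coefficients C(j−1,i)). Let M, a, b be integers with 0 ≤ a ≤ b+1 ≤ M−ℓ+2, and let β = (β_0,…,β_M) = β(d) for a sequence d = (d_0,…,d_M) satisfying d_{a+1} = d_{a+2} = ⋯ = d_{a+ℓ−2} = p and d_{b+ℓ−1} = d_{b+ℓ−2} = ⋯ = d_{b+2} = q. Then ∑_{k=a}^{b} (η_0 + ∑_{j=1}^{ℓ} η_j β_{k+j−1}) = η_0(b−a+1) + ζ^0 ∑_{k=a}^{b+ℓ−1} β_k − ζ^1 β_a − ζ̄^1 β_{b+ℓ−1} − ζ^2 p + ζ̄^2 q. -/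
/-!
Exchanging the two summations, the coefficient of `η j` is the window sum
`∑_{k=a}^{b} β (k + j - 1)`, which is the full sum `∑_{k=a}^{b+ℓ-1} β k` minus a head of
`j - 1` terms and a tail of `ℓ - j` terms. Since `d` is constant (`p`, resp. `q`) there, `β` is an
arithmetic progression on the head and on the tail, so these sums are
`(j - 1) β_a + C(j - 1, 2) p` and `(ℓ - j) β_{b+ℓ-1} - C(ℓ - j, 2) q`. The reflection
`j ↦ ℓ + 1 - j` turns the tail coefficients into the conjugate quantities `ζ̄^1`, `ζ̄^2`.
-/

open Finset

section ArithmeticProgression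

variable {M : Type*} [AddCommMonoid M] {f : ℕ → M} {m n : ℕ} {c : M}

theorem apply_add_eq_add_nsmul_of_step (h : ∀ i, i + 1 < n → f (m + i + 1) = f (m + i) + c)
    {i : ℕ} (hi : i < n) : f (m + i) = f m + i • c := by
  induction i with
  | zero => simp
  | succ i ih =>
    rw [← add_assoc, h i hi, ih (by omega), succ_nsmul, add_assoc]

theorem sum_range_apply_add_of_step (h : ∀ i, i + 1 < n → f (m + i + 1) = f (m + i) + c) :
    ∑ i ∈ range n, f (m + i) = n • f m + n.choose 2 • c := by
  induction n with
  | zero => simp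
  | succ n ih =>
    rw [sum_range_succ, ih fun i hi => h i (by omega),
      apply_add_eq_add_nsmul_of_step h (Nat.lt_succ_self n), Nat.choose_succ_succ',
      Nat.choose_one_right, succ_nsmul, add_nsmul]
    abel

theorem sum_range_apply_add_add_choose_two_nsmul_of_step
    (h : ∀ i, i + 1 < n → f (m + i + 1) = f (m + i) + c) :
    ∑ i ∈ range n, f (m + i) + n.choose 2 • c = n • f (m + n - 1) := by
  cases n with
  | zero => simp
  | succ k =>
    have hmul : (k + 1) * k = (k + 1).choose 2 + (k + 1).choose 2 := by
      simpa [Nat.mul_two] using Nat.add_one_mul_choose_eq k 1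
    rw [sum_range_apply_add_of_step h, Nat.add_sub_assoc (by omega), Nat.add_sub_cancel,
      apply_add_eq_add_nsmul_of_step h (Nat.lt_succ_self k), nsmul_add, smul_smul, hmul, add_nsmul c]
    abel

end ArithmeticProgression

section Window

variable {G : Type*} [AddCommGroup G] {β : ℕ → G} {a b ℓ t : ℕ} {p q : G}

theorem sum_Icc_apply_add_eq_of_steps (hab : a ≤ b + 1) (ht : t < ℓ)
    (hp : ∀ i, i + 2 < ℓ → β (a + i + 1) = β (a + i) + p)
    (hq : ∀ i, i + 2 < ℓ → β (b + 1 + i + 1) = β (b + 1 + i) + q) :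
    ∑ k ∈ Icc a b, β (k + t) = ∑ k ∈ Icc a (b + ℓ - 1), β k - t • β a - t.choose 2 • p
      - (ℓ - 1 - t) • β (b + ℓ - 1) + (ℓ - 1 - t).choose 2 • q := by
  have hwindow : ∑ k ∈ Icc a b, β (k + t) = ∑ i ∈ range (b + 1 - a), β (a + t + i) := by
    rw [← Ico_add_one_right_eq_Icc, sum_Ico_eq_sum_range]
    exact sum_congr rfl fun i _ => by rw [add_right_comm]
  have hsplit : ∑ k ∈ Icc a (b + ℓ - 1), β k = ∑ i ∈ range t, β (a + i)
      + ∑ i ∈ range (b + 1 - a), β (a + t + i) + ∑ i ∈ range (ℓ - 1 - t), β (b + t + 1 + i) := by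
    rw [← Ico_add_one_right_eq_Icc, sum_Ico_eq_sum_range,
      show b + ℓ - 1 + 1 - a = t + (b + 1 - a) + (ℓ - 1 - t) by omega, sum_range_add,
      sum_range_add]
    congr 1
    · exact congrArg _ (sum_congr rfl fun i _ => by rw [add_assoc])
    · exact sum_congr rfl fun i _ => by congr 1; omega
  have hinit := sum_range_apply_add_of_step (f := β) (m := a) (n := t) (c := p)
    fun i hi => hp i (by omega)
  have hfinal := sum_range_apply_add_add_choose_two_nsmul_of_step (f := β) (m := b + t + 1)
    (n := ℓ - 1 - t) (c := q) fun i hi => by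
      simpa only [show b + t + 1 + i = b + 1 + (t + i) by omega] using hq (t + i) (by omega)
  rw [show b + t + 1 + (ℓ - 1 - t) - 1 = b + ℓ - 1 by omega] at hfinal
  rw [hwindow, hsplit, hinit, ← hfinal]
  abel

end Window

theorem sum_Icc_one_reflect {M : Type*} [AddCommMonoid M] (f : ℕ → M) (ℓ : ℕ) :
    ∑ j ∈ Icc 1 ℓ, f (ℓ + 1 - j) = ∑ j ∈ Icc 1 ℓ, f j := by
  rw [← Ico_add_one_right_eq_Icc, sum_Ico_reflect _ _ (Nat.le_succ _), Nat.add_sub_cancel_left,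
    Nat.add_sub_cancel]

theorem sum_shifted_affine_general (ℓ : ℕ) (η : ℕ → ℚ)
    (a b : ℕ) (hab : a ≤ b + 1)
    (d : ℕ → ℚ) (p q : ℚ)
    (hp : ∀ j, a + 1 ≤ j → j + 2 ≤ a + ℓ → d j = p)
    (hq : ∀ j, b + 2 ≤ j → j + 1 ≤ b + ℓ → d j = q)
    (β : ℕ → ℚ) (hβ : ∀ i, β i = ∑ j ∈ Finset.range (i + 1), d j) :
    ∑ k ∈ Finset.Icc a b, (η 0 + ∑ j ∈ Finset.Icc 1 ℓ, η j * β (k + j - 1))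
      = η 0 * ((b : ℚ) - (a : ℚ) + 1)
        + (∑ j ∈ Finset.Icc 1 ℓ, ((j - 1).choose 0 : ℚ) * η j)
            * (∑ k ∈ Finset.Icc a (b + ℓ - 1), β k)
        - (∑ j ∈ Finset.Icc 1 ℓ, ((j - 1).choose 1 : ℚ) * η j) * β a
        - (∑ j ∈ Finset.Icc 1 ℓ, ((j - 1).choose 1 : ℚ) * η (ℓ + 1 - j)) * β (b + ℓ - 1)
        - (∑ j ∈ Finset.Icc 1 ℓ, ((j - 1).choose 2 : ℚ) * η j) * p
        + (∑ j ∈ Finset.Icc 1 ℓ, ((j - 1).choose 2 : ℚ) * η (ℓ + 1 - j)) * q := by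
  have hstep (i : ℕ) : β (i + 1) = β i + d (i + 1) := by rw [hβ, hβ, sum_range_succ]
  have hwindow (j : ℕ) (hj : j ∈ Icc 1 ℓ) : ∑ k ∈ Icc a b, β (k + j - 1)
      = ∑ k ∈ Icc a (b + ℓ - 1), β k - ((j - 1 : ℕ) : ℚ) * β a - ((j - 1).choose 2 : ℚ) * p
        - ((ℓ - j : ℕ) : ℚ) * β (b + ℓ - 1) + ((ℓ - j).choose 2 : ℚ) * q := by
    rw [mem_Icc] at hj
    have := sum_Icc_apply_add_eq_of_steps (β := β) (ℓ := ℓ) (t := j - 1) hab (by omega)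
      (fun i _ => by rw [hstep, hp _ (by omega) (by omega)])
      (fun i _ => by rw [hstep, hq _ (by omega) (by omega)])
    simp only [nsmul_eq_mul, show ℓ - 1 - (j - 1) = ℓ - j by omega] at this
    simpa only [Nat.add_sub_assoc hj.1] using this
  have hreflect (i : ℕ) : ∑ j ∈ Icc 1 ℓ, ((j - 1).choose i : ℚ) * η (ℓ + 1 - j)
      = ∑ j ∈ Icc 1 ℓ, ((ℓ - j).choose i : ℚ) * η j := by
    rw [← sum_Icc_one_reflect (fun j => ((ℓ - j).choose i : ℚ) * η j)]
    exact sum_congr rfl fun j hj => by rw [show ℓ - (ℓ + 1 - j) = j - 1 by grind]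
  calc _ = η 0 * ((b + 1 - a : ℕ) : ℚ) + ∑ j ∈ Icc 1 ℓ, η j * ∑ k ∈ Icc a b, β (k + j - 1) := by
        rw [sum_add_distrib, sum_const, Nat.card_Icc, sum_comm, nsmul_eq_mul, mul_comm]
        simp only [mul_sum]
    _ = _ := by
      rw [sum_congr rfl fun j hj => by rw [hwindow j hj], hreflect 1, hreflect 2, Nat.cast_sub hab]
      simp only [Nat.choose_zero_right, Nat.choose_one_right, mul_sub, mul_add, sum_sub_distrib,
        sum_add_distrib, sum_mul, mul_assoc, mul_left_comm (η _), Nat.cast_one, one_mul,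
        Nat.cast_add]
      ring

/-- let `ℓ ≥ 1` and `η_0, …, η_ℓ ∈ ℚ`; set `ζ^i = ∑_{j=1}^{ℓ} C(j−1, i) η_j`
and `ζ̄^i = ∑_{j=1}^{ℓ} C(j−1, i) η_{ℓ+1−j}`.  Let `0 ≤ a ≤ b + 1 ≤ M − ℓ + 2` and let
`β = β(d)` (the partial sums of `d`) for a sequence `d` with
`d_{a+1} = ⋯ = d_{a+ℓ−2} = p` and `d_{b+ℓ−1} = ⋯ = d_{b+2} = q`.  Then
`∑_{k=a}^{b} (η_0 + ∑_{j=1}^{ℓ} η_j β_{k+j−1})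
  = η_0 (b−a+1) + ζ^0 ∑_{k=a}^{b+ℓ−1} β_k − ζ^1 β_a − ζ̄^1 β_{b+ℓ−1} − ζ^2 p + ζ̄^2 q`. -/
theorem sum_shifted_affine (ℓ : ℕ) (hℓ : 1 ≤ ℓ) (η : ℕ → ℚ)
    (M a b : ℕ) (hab : a ≤ b + 1) (hbM : b + ℓ ≤ M + 1)
    (d : ℕ → ℚ) (p q : ℚ)
    (hp : ∀ j, a + 1 ≤ j → j + 2 ≤ a + ℓ → d j = p)
    (hq : ∀ j, b + 2 ≤ j → j + 1 ≤ b + ℓ → d j = q)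
    (β : ℕ → ℚ) (hβ : ∀ i, β i = ∑ j ∈ Finset.range (i + 1), d j) :
    ∑ k ∈ Finset.Icc a b, (η 0 + ∑ j ∈ Finset.Icc 1 ℓ, η j * β (k + j - 1))
      = η 0 * ((b : ℚ) - (a : ℚ) + 1)
        + (∑ j ∈ Finset.Icc 1 ℓ, ((j - 1).choose 0 : ℚ) * η j)
            * (∑ k ∈ Finset.Icc a (b + ℓ - 1), β k)
        - (∑ j ∈ Finset.Icc 1 ℓ, ((j - 1).choose 1 : ℚ) * η j) * β a
        - (∑ j ∈ Finset.Icc 1 ℓ, ((j - 1).choose 1 : ℚ) * η (ℓ + 1 - j)) * β (b + ℓ - 1)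
        - (∑ j ∈ Finset.Icc 1 ℓ, ((j - 1).choose 2 : ℚ) * η j) * p
        + (∑ j ∈ Finset.Icc 1 ℓ, ((j - 1).choose 2 : ℚ) * η (ℓ + 1 - j)) * q :=
  sum_shifted_affine_general ℓ η a b hab d p q hp hq β hβ
end
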